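/- arXiv:1804.01802 — 8 statements merged into one kernel-verified Lean document; each statement's English description precedes it below -/
import Mathlib

section
/- Let X be a metric space and let G : X × ℝ → ℝ be continuous. Suppose that (1) for every v ∈ X the function g_v = G(v,·) : ℝ → ℝ is an increasing homeomorphism of ℝ, and (2) whenever a sequence {v_n} in X is bounded and b_n → +∞ (respectively b_n → −∞) one has G(v_n, b_n) → +∞ (respectively G(v_n, b_n) → −∞). Fix a constant C ∈ ℝ. Then the function c : X → ℝ defined by the relation G(v, c(v)) = C is well defined and continuous. -/
/-!
Bijectivity of `G (v, ·)` gives `c`. For continuity at `v₀`, take `a < c v₀ < a'`: strict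
monotonicity gives `G (v₀, a) < C < G (v₀, a')`, these strict inequalities persist for `v` near
`v₀` by continuity of `G (·, a)` and `G (·, a')`, and monotonicity turns them back into
`a < c v < a'`.
-/

open Filter Topology

section Implicit

variable {X β γ : Type*} [TopologicalSpace X] [LinearOrder β] [LinearOrder γ]
  [TopologicalSpace γ] [OrderClosedTopology γ]
  {f : X → β → γ} {c : X → β} {C : γ}

theorem eventually_lt_of_strictMono_of_apply_eq (hf : ∀ b, Continuous fun v => f v b)
    (hmono : ∀ v, StrictMono (f v)) (hc : ∀ v, f v (c v) = C) {v₀ : X} {a : β}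
    (ha : a < c v₀) : ∀ᶠ v in 𝓝 v₀, a < c v := by
  have hv₀ : f v₀ a < C := hc v₀ ▸ hmono v₀ ha
  filter_upwards [(isOpen_lt (hf a) continuous_const).mem_nhds hv₀] with v hv
  exact (hmono v).lt_iff_lt.mp (hc v ▸ hv)

theorem continuous_of_strictMono_of_apply_eq [TopologicalSpace β] [OrderTopology β]
    (hf : ∀ b, Continuous fun v => f v b) (hmono : ∀ v, StrictMono (f v))
    (hc : ∀ v, f v (c v) = C) : Continuous c := by
  refine continuous_iff_continuousAt.mpr fun v₀ => tendsto_order.mpr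
    ⟨fun a ha => eventually_lt_of_strictMono_of_apply_eq hf hmono hc ha, fun a ha => ?_⟩
  -- the upper bound is the lower bound in the order duals of `β` and `γ`
  exact eventually_lt_of_strictMono_of_apply_eq (f := fun v b => OrderDual.toDual (f v b.ofDual))
    (c := fun v => OrderDual.toDual (c v)) (C := OrderDual.toDual C)
    (fun b => continuous_toDual.comp (hf b.ofDual)) (fun v => (hmono v).dual)
    (fun v => congrArg OrderDual.toDual (hc v)) (a := OrderDual.toDual a) ha

end Implicit

theorem continuous_implicit_function_general
    {X : Type*} [MetricSpace X]
    (G : X × ℝ → ℝ) (hG : Continuous G)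
    (hmono : ∀ v : X, StrictMono fun b => G (v, b))
    (hbij : ∀ v : X, Function.Bijective fun b => G (v, b))
    (C : ℝ) :
    ∃ c : X → ℝ, Continuous c ∧ (∀ v : X, G (v, c v) = C) ∧
      ∀ v : X, ∀ b : ℝ, G (v, b) = C → b = c v := by
  choose c hc using fun v => (hbij v).surjective C
  have hGb : ∀ b, Continuous fun v => G (v, b) := fun b =>
    hG.comp (continuous_id.prodMk continuous_const)
  exact ⟨c, continuous_of_strictMono_of_apply_eq (f := fun v b => G (v, b)) hGb hmono hc, hc,
    fun v b hb => (hmono v).injective (hb.trans (hc v).symm)⟩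

/-- Lemma 3.1 (implicit-function type lemma): if `G : X × ℝ → ℝ` is continuous,
each `G(v,·)` is an increasing homeomorphism of `ℝ`, and `G(vₙ,bₙ) → ±∞`
whenever `{vₙ}` is bounded and `bₙ → ±∞`, then the function `c` defined by
`G(v, c(v)) = C` is well defined and continuous. -/
theorem continuous_implicit_function
    {X : Type*} [MetricSpace X]
    (G : X × ℝ → ℝ) (hG : Continuous G)
    (hmono : ∀ v : X, StrictMono fun b => G (v, b))
    (hcont : ∀ v : X, Continuous fun b => G (v, b))
    (hbij : ∀ v : X, Function.Bijective fun b => G (v, b))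
    (htop : ∀ (vn : ℕ → X) (bn : ℕ → ℝ), Bornology.IsBounded (Set.range vn) →
      Tendsto bn atTop atTop → Tendsto (fun n => G (vn n, bn n)) atTop atTop)
    (hbot : ∀ (vn : ℕ → X) (bn : ℕ → ℝ), Bornology.IsBounded (Set.range vn) →
      Tendsto bn atTop atBot → Tendsto (fun n => G (vn n, bn n)) atTop atBot)
    (C : ℝ) :
    ∃ c : X → ℝ, Continuous c ∧ (∀ v : X, G (v, c v) = C) ∧
      ∀ v : X, ∀ b : ℝ, G (v, b) = C → b = c v :=
  continuous_implicit_function_general G hG hmono hbij C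
end

section
/- Let ψ : ℝ → ℝ be an increasing homeomorphism of ℝ (e.g. ψ = (Φ')⁻¹ for Φ as in the boundary value problem) and fix A, B ∈ ℝ. Then for every continuous function v : [0,1] → ℝ there exists a unique constant c(v) ∈ ℝ such that A + ∫₀¹ ψ(∫₀^τ v(s) ds + c(v)) dτ = B; moreover the map v ↦ c(v) is continuous from C([0,1]) (with the supremum norm) to ℝ. -/
/-!
Let `Φ(v, c) = ∫₀¹ ψ(∫₀^τ v + c) dτ`. For fixed `v`, `Φ(v, ·)` is continuous and strictly
increasing, and lies between `ψ(c - M)` and `ψ(c + M)` where `M` bounds the primitive of `v` on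
`[0,1]`; as `ψ` is onto, `Φ(v, ·)` takes the value `B - A` at exactly one point `c(v)`.
For fixed `c`, `Φ(·, c)` is continuous. Hence if `a < c(v₀) < b`, the strict inequalities
`Φ(v₀, a) < B - A < Φ(v₀, b)` persist for `v` near `v₀`, and monotonicity forces `a < c(v) < b`.
-/

open Set Filter Topology MeasureTheory

/-- The extension of a continuous function on `[0,1]` to all of `ℝ`
obtained by projecting onto `[0,1]`. -/
noncomputable def extIcc (v : C(Set.Icc (0:ℝ) 1, ℝ)) : ℝ → ℝ :=
  fun s => v (Set.projIcc 0 1 zero_le_one s)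

theorem continuous_of_apply_eq_of_strictMono {X α β : Type*} [TopologicalSpace X]
    [LinearOrder α] [TopologicalSpace α] [OrderTopology α]
    [LinearOrder β] [TopologicalSpace β] [OrderClosedTopology β]
    {F : X → α → β} (hcont : ∀ a, Continuous fun x => F x a)
    (hmono : ∀ x, StrictMono (F x))
    {y : β} {g : X → α} (hg : ∀ x, F x (g x) = y) : Continuous g := by
  refine continuous_iff_continuousAt.2 fun x₀ =>
    tendsto_order.2 ⟨fun a ha => ?_, fun b hb => ?_⟩
  · have hlt : F x₀ a < y := hg x₀ ▸ hmono x₀ ha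
    filter_upwards [((hcont a).tendsto x₀).eventually_lt_const hlt] with x hx
    exact (hmono x).lt_iff_lt.1 (by rwa [hg x])
  · have hlt : y < F x₀ b := hg x₀ ▸ hmono x₀ hb
    filter_upwards [((hcont b).tendsto x₀).eventually_const_lt hlt] with x hx
    exact (hmono x).lt_iff_lt.1 (by rwa [hg x])

section ShiftedIntegral

variable {ψ g : ℝ → ℝ} {a b : ℝ}

theorem continuous_intervalIntegral_comp_add (hψ : Continuous ψ) (hg : Continuous g) :
    Continuous fun c => ∫ τ in a..b, ψ (g τ + c) :=
  intervalIntegral.continuous_parametric_intervalIntegral_of_continuous'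
    (f := fun c τ => ψ (g τ + c)) (hψ.comp ((hg.comp continuous_snd).add continuous_fst)) a b

theorem strictMono_intervalIntegral_comp_add (hmono : StrictMono ψ) (hψ : Continuous ψ)
    (hg : Continuous g) (hab : a < b) : StrictMono fun c => ∫ τ in a..b, ψ (g τ + c) := by
  intro c c' hc
  have hcont : ∀ d, ContinuousOn (fun τ => ψ (g τ + d)) (Icc a b) := fun d =>
    (hψ.comp (hg.add continuous_const)).continuousOn
  exact intervalIntegral.integral_lt_integral_of_continuousOn_of_le_of_exists_lt hab
    (hcont c) (hcont c') (fun τ _ => (hmono (by linarith)).le)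
    ⟨a, left_mem_Icc.2 hab.le, hmono (by linarith)⟩

theorem surjective_intervalIntegral_comp_add (hmono : Monotone ψ) (hψ : Continuous ψ)
    (hsurj : Function.Surjective ψ) (hg : Continuous g) (hab : a < b) :
    Function.Surjective fun c => ∫ τ in a..b, ψ (g τ + c) := by
  intro y
  obtain ⟨M, hM⟩ := (isCompact_Icc (a := a) (b := b)).exists_bound_of_continuousOn
    hg.continuousOn
  obtain ⟨d, hd⟩ := hsurj (y / (b - a))
  have hy : ∫ _ in a..b, ψ d = y := by
    rw [intervalIntegral.integral_const, hd, smul_eq_mul]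
    field_simp [(sub_pos.2 hab).ne']
  have hint : ∀ c, IntervalIntegrable (fun τ => ψ (g τ + c)) volume a b := fun c =>
    (hψ.comp (hg.add continuous_const)).intervalIntegrable a b
  refine intermediate_value_univ (d - M) (d + M) (continuous_intervalIntegral_comp_add hψ hg)
    ⟨?_, ?_⟩
  · rw [← hy]
    refine intervalIntegral.integral_mono_on hab.le (hint _) intervalIntegrable_const
      fun τ hτ => hmono ?_
    linarith [(abs_le.1 (hM τ hτ)).2]
  · rw [← hy]
    refine intervalIntegral.integral_mono_on hab.le intervalIntegrable_const (hint _)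
      fun τ hτ => hmono ?_
    linarith [(abs_le.1 (hM τ hτ)).1]

end ShiftedIntegral

theorem continuous_primitive_extIcc :
    Continuous fun p : C(Icc (0:ℝ) 1, ℝ) × ℝ => ∫ s in (0:ℝ)..p.2, extIcc p.1 s :=
  intervalIntegral.continuous_parametric_primitive_of_continuous
    (ContinuousEval.continuous_eval.comp
      (continuous_fst.prodMk ((continuous_projIcc (h := zero_le_one)).comp continuous_snd)))

/-- Lemma 3.2, Dirichlet case: for every continuous `v` on `[0,1]` there is a
unique constant `c(v)` with `A + ∫₀¹ ψ(∫₀^τ v(s) ds + c(v)) dτ = B`, and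
`v ↦ c(v)` is continuous with respect to the supremum norm. -/
theorem dirichlet_constant_continuous
    (ψ : ℝ → ℝ) (hmono : StrictMono ψ) (hcont : Continuous ψ)
    (hbij : Function.Bijective ψ) (A B : ℝ) :
    ∃ c : C(Set.Icc (0:ℝ) 1, ℝ) → ℝ, Continuous c ∧
      ∀ v : C(Set.Icc (0:ℝ) 1, ℝ),
        (A + ∫ τ in (0:ℝ)..1, ψ ((∫ s in (0:ℝ)..τ, extIcc v s) + c v) = B) ∧
        ∀ c' : ℝ,
          A + ∫ τ in (0:ℝ)..1, ψ ((∫ s in (0:ℝ)..τ, extIcc v s) + c') = B →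
          c' = c v := by
  have hprim (v : C(Icc (0:ℝ) 1, ℝ)) : Continuous fun τ => ∫ s in (0:ℝ)..τ, extIcc v s :=
    continuous_primitive_extIcc.comp (Continuous.prodMk_right v)
  have hstrict (v : C(Icc (0:ℝ) 1, ℝ)) :=
    strictMono_intervalIntegral_comp_add hmono hcont (hprim v) zero_lt_one
  have hcontv (c : ℝ) :
      Continuous fun v : C(Icc (0:ℝ) 1, ℝ) =>
        ∫ τ in (0:ℝ)..1, ψ ((∫ s in (0:ℝ)..τ, extIcc v s) + c) :=
    intervalIntegral.continuous_parametric_intervalIntegral_of_continuous'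
      (f := fun v τ => ψ ((∫ s in (0:ℝ)..τ, extIcc v s) + c))
      (hcont.comp (continuous_primitive_extIcc.add continuous_const)) 0 1
  choose c hc using fun v => surjective_intervalIntegral_comp_add hmono.monotone hcont hbij.2
    (hprim v) zero_lt_one (B - A)
  refine ⟨c, continuous_of_apply_eq_of_strictMono hcontv hstrict hc,
    fun v => ⟨?_, fun c' hc' => ?_⟩⟩
  · linarith [hc v]
  · exact (hstrict v).injective (by linarith [hc v])
end

section
/- Let ψ : ℝ → ℝ be an increasing homeomorphism of ℝ and fix A, B ∈ ℝ and α, β, a, b > 0. Then for every continuous function v : [0,1] → ℝ there exists a unique constant c(v) ∈ ℝ such that a·(−A/α + (β/α)·ψ(c(v)) + ∫₀¹ ψ(∫₀^τ v(s) ds + c(v)) dτ) + b·ψ(∫₀¹ v(s) ds + c(v)) = B; moreover the map v ↦ c(v) is continuous from C([0,1]) (with the supremum norm) to ℝ. Consequently, setting c₁(v) = −A/α + (β/α)·ψ(c(v)), the function u(t) = c₁(v) + ∫₀^t ψ(∫₀^τ v(s) ds + c(v)) dτ satisfies the Sturm–Liouville boundary conditions −α·u(0) + β·u̇(0) = A and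 a·u(1) + b·u̇(1) = B. -/
open Set Filter Topology MeasureTheory

namespace SLHelper

noncomputable def w (v : C(Set.Icc (0:ℝ) 1, ℝ)) (τ : ℝ) : ℝ :=
  ∫ s in (0:ℝ)..τ, extIcc v s

lemma abs_extIcc_le (v : C(Set.Icc (0:ℝ) 1, ℝ)) (s : ℝ) : |extIcc v s| ≤ ‖v‖ := by
  simpa [extIcc, Real.norm_eq_abs] using v.norm_coe_le_norm (Set.projIcc 0 1 zero_le_one s)

lemma continuous_w_joint : Continuous fun p : C(Set.Icc (0:ℝ) 1, ℝ) × ℝ => w p.1 p.2 := by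
  have h : Continuous (Function.uncurry fun (v : C(Set.Icc (0:ℝ) 1, ℝ)) (s : ℝ) =>
      extIcc v s) := by
    have h1 : Continuous fun p : C(Set.Icc (0:ℝ) 1, ℝ) × Set.Icc (0:ℝ) 1 => p.1 p.2 :=
      continuous_eval
    have h2 : Continuous fun p : C(Set.Icc (0:ℝ) 1, ℝ) × ℝ =>
        ((p.1, Set.projIcc 0 1 zero_le_one p.2) : C(Set.Icc (0:ℝ) 1, ℝ) × Set.Icc (0:ℝ) 1) :=
      continuous_fst.prodMk (continuous_projIcc.comp continuous_snd)
    exact h1.comp h2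
  exact intervalIntegral.continuous_parametric_primitive_of_continuous h

lemma continuous_extIcc (v : C(Set.Icc (0:ℝ) 1, ℝ)) : Continuous (extIcc v) :=
  v.continuous.comp continuous_projIcc

lemma continuous_w (v : C(Set.Icc (0:ℝ) 1, ℝ)) : Continuous (w v) :=
  intervalIntegral.continuous_primitive
    (fun a b => (continuous_extIcc v).intervalIntegrable a b) 0

lemma abs_w_le (v : C(Set.Icc (0:ℝ) 1, ℝ)) {τ : ℝ} (hτ : τ ∈ Icc (0:ℝ) 1) :
    |w v τ| ≤ ‖v‖ := by
  have h := intervalIntegral.norm_integral_le_of_norm_le_const (a := (0:ℝ)) (b := τ)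
    (C := ‖v‖) (f := extIcc v) (fun x _ => by
      simpa [Real.norm_eq_abs] using abs_extIcc_le v x)
  rw [Real.norm_eq_abs] at h
  calc |w v τ| ≤ ‖v‖ * |τ - 0| := h
    _ ≤ ‖v‖ * 1 := by
        apply mul_le_mul_of_nonneg_left _ (norm_nonneg v)
        rw [sub_zero, abs_of_nonneg hτ.1]; exact hτ.2
    _ = ‖v‖ := mul_one _

variable (ψ : ℝ → ℝ) (A α β a b : ℝ)

/-- The compatibility map. -/
noncomputable def Phi (v : C(Set.Icc (0:ℝ) 1, ℝ)) (c : ℝ) : ℝ :=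
  a * (-A / α + (β / α) * ψ c + ∫ τ in (0:ℝ)..1, ψ (w v τ + c)) + b * ψ (w v 1 + c)

variable {ψ}

lemma intInt (hcont : Continuous ψ) (v : C(Set.Icc (0:ℝ) 1, ℝ)) (c x y : ℝ) :
    IntervalIntegrable (fun τ => ψ (w v τ + c)) volume x y :=
  (hcont.comp ((continuous_w v).add continuous_const)).intervalIntegrable x y

lemma continuous_Phi (hcont : Continuous ψ) :
    Continuous fun p : C(Set.Icc (0:ℝ) 1, ℝ) × ℝ => Phi ψ A α β a b p.1 p.2 := by
  have h1 : Continuous fun p : C(Set.Icc (0:ℝ) 1, ℝ) × ℝ =>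
      ∫ τ in (0:ℝ)..1, ψ (w p.1 τ + p.2) := by
    apply intervalIntegral.continuous_parametric_intervalIntegral_of_continuous'
      (f := fun (p : C(Set.Icc (0:ℝ) 1, ℝ) × ℝ) (τ : ℝ) => ψ (w p.1 τ + p.2))
    exact hcont.comp
      (((continuous_w_joint.comp
        ((continuous_fst.comp continuous_fst).prodMk continuous_snd)).add
        (continuous_snd.comp continuous_fst)))
  have h2 : Continuous fun p : C(Set.Icc (0:ℝ) 1, ℝ) × ℝ => ψ (w p.1 1 + p.2) :=
    hcont.comp ((continuous_w_joint.comp (continuous_fst.prodMk continuous_const)).add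
      continuous_snd)
  exact (continuous_const.mul
      (((continuous_const.add (continuous_const.mul (hcont.comp continuous_snd))).add h1))).add
    (continuous_const.mul h2)

lemma strictMono_Phi (hmono : StrictMono ψ) (hcont : Continuous ψ)
    (hα : 0 < α) (hβ : 0 < β) (ha : 0 < a) (hb : 0 < b) (v : C(Set.Icc (0:ℝ) 1, ℝ)) :
    StrictMono (fun c => Phi ψ A α β a b v c) := by
  intro c₁ c₂ h
  have hint : (∫ τ in (0:ℝ)..1, ψ (w v τ + c₁)) ≤ ∫ τ in (0:ℝ)..1, ψ (w v τ + c₂) := by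
    apply intervalIntegral.integral_mono_on zero_le_one (intInt hcont v c₁ 0 1)
      (intInt hcont v c₂ 0 1)
    exact fun τ _ => hmono.monotone (by linarith)
  have h1 : ψ c₁ < ψ c₂ := hmono h
  have h2 : ψ (w v 1 + c₁) < ψ (w v 1 + c₂) := hmono (by linarith)
  have hβα : 0 < β / α := div_pos hβ hα
  have key1 : a * (-A / α + (β / α) * ψ c₁ + ∫ τ in (0:ℝ)..1, ψ (w v τ + c₁)) ≤
      a * (-A / α + (β / α) * ψ c₂ + ∫ τ in (0:ℝ)..1, ψ (w v τ + c₂)) := by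
    apply mul_le_mul_of_nonneg_left _ ha.le
    have := mul_le_mul_of_nonneg_left h1.le hβα.le
    linarith
  have key2 : b * ψ (w v 1 + c₁) < b * ψ (w v 1 + c₂) := (mul_lt_mul_iff_right₀ hb).2 h2
  exact add_lt_add_of_le_of_lt key1 key2

lemma exists_root_Phi (hmono : StrictMono ψ) (hcont : Continuous ψ)
    (hbij : Function.Bijective ψ)
    (hα : 0 < α) (hβ : 0 < β) (ha : 0 < a) (hb : 0 < b)
    (B : ℝ) (v : C(Set.Icc (0:ℝ) 1, ℝ)) :
    ∃ c : ℝ, Phi ψ A α β a b v c = B := by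
  have hψtop : Tendsto ψ atTop atTop :=
    hmono.monotone.tendsto_atTop_atTop fun y =>
      ⟨Function.surjInv hbij.2 y, (Function.surjInv_eq hbij.2 y).ge⟩
  have hψbot : Tendsto ψ atBot atBot :=
    tendsto_atBot_atBot_of_monotone hmono.monotone fun y =>
      ⟨Function.surjInv hbij.2 y, (Function.surjInv_eq hbij.2 y).le⟩
  set M := ‖v‖ with hM
  have hw1 := abs_w_le v (right_mem_Icc.2 zero_le_one)
  rw [abs_le] at hw1
  -- lower bound
  have hL : ∀ c : ℝ, a * (-A / α + (β / α) * ψ c + ψ (c - M)) + b * ψ (c - M) ≤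
      Phi ψ A α β a b v c := by
    intro c
    have hint : ψ (c - M) ≤ ∫ τ in (0:ℝ)..1, ψ (w v τ + c) := by
      have : (∫ τ in (0:ℝ)..1, ψ (c - M)) ≤ ∫ τ in (0:ℝ)..1, ψ (w v τ + c) := by
        apply intervalIntegral.integral_mono_on zero_le_one (intervalIntegrable_const)
          (intInt hcont v c 0 1)
        intro τ hτ
        have := (abs_le.1 (abs_w_le v hτ)).1
        exact hmono.monotone (by linarith)
      simpa using this
    have he : ψ (c - M) ≤ ψ (w v 1 + c) := hmono.monotone (by linarith [hw1.1])
    have k1 : a * (-A / α + (β / α) * ψ c + ψ (c - M)) ≤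
        a * (-A / α + (β / α) * ψ c + ∫ τ in (0:ℝ)..1, ψ (w v τ + c)) :=
      mul_le_mul_of_nonneg_left (by linarith) ha.le
    have k2 : b * ψ (c - M) ≤ b * ψ (w v 1 + c) :=
      mul_le_mul_of_nonneg_left he hb.le
    exact add_le_add k1 k2
  have hU : ∀ c : ℝ, Phi ψ A α β a b v c ≤
      a * (-A / α + (β / α) * ψ c + ψ (c + M)) + b * ψ (c + M) := by
    intro c
    have hint : (∫ τ in (0:ℝ)..1, ψ (w v τ + c)) ≤ ψ (c + M) := by
      have : (∫ τ in (0:ℝ)..1, ψ (w v τ + c)) ≤ ∫ τ in (0:ℝ)..1, ψ (c + M) := by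
        apply intervalIntegral.integral_mono_on zero_le_one (intInt hcont v c 0 1)
          (intervalIntegrable_const)
        intro τ hτ
        have := (abs_le.1 (abs_w_le v hτ)).2
        exact hmono.monotone (by linarith)
      simpa using this
    have he : ψ (w v 1 + c) ≤ ψ (c + M) := hmono.monotone (by linarith [hw1.2])
    have k1 : a * (-A / α + (β / α) * ψ c + ∫ τ in (0:ℝ)..1, ψ (w v τ + c)) ≤
        a * (-A / α + (β / α) * ψ c + ψ (c + M)) :=
      mul_le_mul_of_nonneg_left (by linarith) ha.le
    have k2 : b * ψ (w v 1 + c) ≤ b * ψ (c + M) :=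
      mul_le_mul_of_nonneg_left he hb.le
    exact add_le_add k1 k2
  have hLtop : Tendsto (fun c => a * (-A / α + (β / α) * ψ c + ψ (c - M)) + b * ψ (c - M))
      atTop atTop := by
    have h1 : Tendsto (fun c : ℝ => ψ (c - M)) atTop atTop := by
      have := tendsto_atTop_add_const_right atTop (-M) (tendsto_id (α := ℝ))
      simpa [sub_eq_add_neg, Function.comp_def] using hψtop.comp this
    have h2 : Tendsto (fun c : ℝ => (β / α) * ψ c) atTop atTop :=
      hψtop.const_mul_atTop (div_pos hβ hα)
    have inner : Tendsto (fun c : ℝ => -A / α + (β / α) * ψ c + ψ (c - M)) atTop atTop := by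
      have := Filter.Tendsto.atTop_add_atTop (tendsto_atTop_add_const_left atTop (-A / α) h2) h1
      simpa [add_assoc] using this
    exact Filter.Tendsto.atTop_add_atTop (inner.const_mul_atTop ha) (h1.const_mul_atTop hb)
  have hUbot : Tendsto (fun c => a * (-A / α + (β / α) * ψ c + ψ (c + M)) + b * ψ (c + M))
      atBot atBot := by
    have h1 : Tendsto (fun c : ℝ => ψ (c + M)) atBot atBot := by
      have := tendsto_atBot_add_const_right atBot M (tendsto_id (α := ℝ))
      exact hψbot.comp this
    have h2 : Tendsto (fun c : ℝ => (β / α) * ψ c) atBot atBot :=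
      hψbot.const_mul_atBot (div_pos hβ hα)
    have inner : Tendsto (fun c : ℝ => -A / α + (β / α) * ψ c + ψ (c + M)) atBot atBot := by
      have := Filter.Tendsto.atBot_add_atBot (tendsto_atBot_add_const_left atBot (-A / α) h2) h1
      simpa [add_assoc] using this
    exact Filter.Tendsto.atBot_add_atBot (inner.const_mul_atBot ha) (h1.const_mul_atBot hb)
  obtain ⟨c₂, hc₂⟩ := (hLtop.eventually_ge_atTop B).exists
  obtain ⟨c₁, hc₁⟩ := (hUbot.eventually_le_atBot B).exists
  have hg : Continuous fun c => Phi ψ A α β a b v c :=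
    (continuous_Phi A α β a b hcont).comp (continuous_const.prodMk continuous_id)
  have hB2 : B ≤ Phi ψ A α β a b v c₂ := le_trans hc₂ (hL c₂)
  have hB1 : Phi ψ A α β a b v c₁ ≤ B := le_trans (hU c₁) hc₁
  have hmem : B ∈ uIcc (Phi ψ A α β a b v c₁) (Phi ψ A α β a b v c₂) :=
    Icc_subset_uIcc ⟨hB1, hB2⟩
  obtain ⟨c₀, _, hc₀⟩ := intermediate_value_uIcc (hg.continuousOn) hmem
  exact ⟨c₀, hc₀⟩

end SLHelper

open SLHelper in
/-- Lemma 3.2, Sturm–Liouville case: for every continuous `v` on `[0,1]` there is a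
unique constant `c(v)` solving the Sturm–Liouville compatibility equation, the map
`v ↦ c(v)` is continuous in the supremum norm, and the resulting function
`u(t) = c₁(v) + ∫₀^t ψ(∫₀^τ v + c(v)) dτ` satisfies the Sturm–Liouville
boundary conditions. -/
theorem sturm_liouville_constant_continuous
    (ψ : ℝ → ℝ) (hmono : StrictMono ψ) (hcont : Continuous ψ)
    (hbij : Function.Bijective ψ)
    (A B α β a b : ℝ) (hα : 0 < α) (hβ : 0 < β) (ha : 0 < a) (hb : 0 < b) :
    ∃ c : C(Set.Icc (0:ℝ) 1, ℝ) → ℝ, Continuous c ∧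
      ∀ v : C(Set.Icc (0:ℝ) 1, ℝ),
        (a * (-A / α + (β / α) * ψ (c v) +
            ∫ τ in (0:ℝ)..1, ψ ((∫ s in (0:ℝ)..τ, extIcc v s) + c v)) +
          b * ψ ((∫ s in (0:ℝ)..1, extIcc v s) + c v) = B) ∧
        (∀ c' : ℝ,
          a * (-A / α + (β / α) * ψ c' +
              ∫ τ in (0:ℝ)..1, ψ ((∫ s in (0:ℝ)..τ, extIcc v s) + c')) +
            b * ψ ((∫ s in (0:ℝ)..1, extIcc v s) + c') = B →
          c' = c v) ∧
        -- Consequently, `u(t) = c₁(v) + ∫₀^t ψ(∫₀^τ v + c(v)) dτ` satisfies the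
        -- Sturm–Liouville boundary conditions.
        (∀ u : ℝ → ℝ,
          (∀ t : ℝ, u t = (-A / α + (β / α) * ψ (c v)) +
            ∫ τ in (0:ℝ)..t, ψ ((∫ s in (0:ℝ)..τ, extIcc v s) + c v)) →
          ∃ u' : ℝ → ℝ,
            (∀ t ∈ Icc (0:ℝ) 1, HasDerivWithinAt u (u' t) (Icc (0:ℝ) 1) t) ∧
            -α * u 0 + β * u' 0 = A ∧ a * u 1 + b * u' 1 = B) := by
  choose cfun hcfun using exists_root_Phi A α β a b hmono hcont hbij hα hβ ha hb B
  have huniq : ∀ v (c' : ℝ), Phi ψ A α β a b v c' = B → c' = cfun v := by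
    intro v c' h
    exact (strictMono_Phi A α β a b hmono hcont hα hβ ha hb v).injective
      (h.trans (hcfun v).symm)
  have hccont : Continuous cfun := by
    rw [continuous_iff_continuousAt]
    intro v₀
    rw [Metric.continuousAt_iff]
    intro ε hε
    set c₀ := cfun v₀ with hc₀
    have hsm := strictMono_Phi A α β a b hmono hcont hα hβ ha hb
    have h1 : Phi ψ A α β a b v₀ (c₀ - ε / 2) < B := by
      have := hsm v₀ (show c₀ - ε / 2 < c₀ by linarith)
      simpa [hc₀, hcfun v₀] using this
    have h2 : B < Phi ψ A α β a b v₀ (c₀ + ε / 2) := by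
      have := hsm v₀ (show c₀ < c₀ + ε / 2 by linarith)
      simpa [hc₀, hcfun v₀] using this
    have hcont1 : Continuous fun v => Phi ψ A α β a b v (c₀ - ε / 2) :=
      (continuous_Phi A α β a b hcont).comp (continuous_id.prodMk continuous_const)
    have hcont2 : Continuous fun v => Phi ψ A α β a b v (c₀ + ε / 2) :=
      (continuous_Phi A α β a b hcont).comp (continuous_id.prodMk continuous_const)
    have e1 : ∀ᶠ v in 𝓝 v₀, Phi ψ A α β a b v (c₀ - ε / 2) < B :=
      (tendsto_order.1 (hcont1.continuousAt (x := v₀))).2 B h1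
    have e2 : ∀ᶠ v in 𝓝 v₀, B < Phi ψ A α β a b v (c₀ + ε / 2) :=
      (tendsto_order.1 (hcont2.continuousAt (x := v₀))).1 B h2
    obtain ⟨δ, hδ, hδ'⟩ := Metric.eventually_nhds_iff.1 (e1.and e2)
    refine ⟨δ, hδ, fun {v} hv => ?_⟩
    obtain ⟨k1, k2⟩ := hδ' hv
    have hlt1 : c₀ - ε / 2 < cfun v := by
      by_contra hcon
      push_neg at hcon
      have := (hsm v).monotone hcon
      rw [hcfun v] at this
      exact absurd (lt_of_le_of_lt this k1) (lt_irrefl B)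
    have hlt2 : cfun v < c₀ + ε / 2 := by
      by_contra hcon
      push_neg at hcon
      have := (hsm v).monotone hcon
      rw [hcfun v] at this
      exact absurd (lt_of_lt_of_le k2 this) (lt_irrefl B)
    rw [Real.dist_eq, abs_lt]
    constructor <;> linarith
  refine ⟨cfun, hccont, fun v => ⟨hcfun v, fun c' h => huniq v c' h, ?_⟩⟩
  intro u hu
  set cv := cfun v with hcv
  refine ⟨fun t => ψ (w v t + cv), ?_, ?_, ?_⟩
  · intro t ht
    have hf : Continuous fun τ => ψ (w v τ + cv) :=
      hcont.comp ((continuous_w v).add continuous_const)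
    have hd : HasDerivAt (fun t => (-A / α + (β / α) * ψ cv) +
        ∫ τ in (0:ℝ)..t, ψ (w v τ + cv)) (ψ (w v t + cv)) t := by
      have := (hf.integral_hasStrictDerivAt 0 t).hasDerivAt
      exact this.const_add _
    have hueq : u = fun t => (-A / α + (β / α) * ψ cv) +
        ∫ τ in (0:ℝ)..t, ψ (w v τ + cv) := funext fun t => hu t
    rw [hueq]
    exact hd.hasDerivWithinAt
  · have hu0 : u 0 = -A / α + (β / α) * ψ cv := by
      rw [hu 0]; simp
    have hw0 : w v 0 = 0 := intervalIntegral.integral_same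
    have hαne : α ≠ 0 := ne_of_gt hα
    simp only [hu0, hw0, zero_add]
    field_simp
    ring
  · have key := hcfun v
    simp only [Phi, w] at key
    rw [hu 1]
    simp only [w]
    linarith [key]
end

section
/- Let Φ : ℝ → ℝ be strictly convex and differentiable with Φ'(0) = 0, let f : [0,1]×ℝ×ℝ → ℝ be continuous and suppose there exists R > 0 such that x·f(t,x,0) > 0 whenever |x| > R. Let λ ∈ (0,1] and let u : [0,1] → ℝ be continuously differentiable such that t ↦ Φ'(u̇(t)) is differentiable on [0,1] with derivative λ·f(t, u(t), u̇(t)). If the function |u| achieves its maximum over [0,1] at some point t₀ ∈ (0,1), then |u(t)| ≤ R for all t ∈ [0,1]. -/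
/-!
Suppose `|u t₀| > R` and put `c = u t₀`. Then `c * u` has an interior local maximum at `t₀`,
so `u̇ t₀ = 0`, and the flux `c * Φ'(u̇)` vanishes at `t₀` with derivative
`λ * c * f(t₀, c, 0) > 0`; hence it is positive just to the right of `t₀`. As `Φ'` is strictly
increasing with `Φ' 0 = 0`, `c * u̇` is positive there too, so `c * u` strictly increases past
`t₀`, contradicting the maximality of `t₀`.
-/

open Set Filter Topology

lemma HasDerivWithinAt.eventually_nhdsGT_pos {g : ℝ → ℝ} {g' x : ℝ}
    (hg : HasDerivWithinAt g g' (Ioi x) x) (hx : g x = 0) (hg' : 0 < g') :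
    ∀ᶠ t in 𝓝[>] x, 0 < g t := by
  have hslope := (hasDerivWithinAt_iff_tendsto_slope' self_notMem_Ioi).1 hg
  filter_upwards [hslope.eventually (eventually_gt_nhds hg'), self_mem_nhdsWithin]
    with t hpos hxt
  exact pos_of_slope_pos hxt hpos hx

lemma eventually_nhdsGT_lt_of_hasDerivAt_pos {f f' : ℝ → ℝ} {x : ℝ}
    (hf : ∀ᶠ t in 𝓝 x, HasDerivAt f (f' t) t) (hf' : ∀ᶠ t in 𝓝[>] x, 0 < f' t) :
    ∀ᶠ t in 𝓝[>] x, f x < f t := by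
  obtain ⟨ε, hxε, hsub⟩ :=
    mem_nhdsGT_iff_exists_Ioo_subset.1 ((hf.filter_mono nhdsWithin_le_nhds).and hf')
  filter_upwards [Ioo_mem_nhdsGT hxε] with t ht
  have hderiv : ∀ s ∈ Ioo x t, HasDerivAt f (f' s) s ∧ 0 < f' s :=
    fun s hs => hsub ⟨hs.1, hs.2.trans ht.2⟩
  have hcont : ContinuousOn f (Icc x t) := by
    intro s hs
    rcases hs.1.eq_or_lt with rfl | hxs
    · exact hf.self_of_nhds.continuousAt.continuousWithinAt
    · exact (hsub ⟨hxs, hs.2.trans_lt ht.2⟩).1.continuousAt.continuousWithinAt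
  obtain ⟨s, hs, hslope⟩ :=
    exists_hasDerivAt_eq_slope f f' ht.1 hcont fun s hs => (hderiv s hs).1
  have hslope_pos : 0 < (f t - f x) / (t - x) := hslope ▸ (hderiv s hs).2
  exact sub_pos.1 ((div_pos_iff_of_pos_right (sub_pos.2 ht.1)).1 hslope_pos)

lemma StrictMono.mul_pos_of_mul_map_pos {φ : ℝ → ℝ} (hφ : StrictMono φ) (h0 : φ 0 = 0)
    {c y : ℝ} (h : 0 < c * φ y) : 0 < c * y := by
  rcases pos_and_pos_or_neg_and_neg_of_mul_pos h with ⟨hc, hy⟩ | ⟨hc, hy⟩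
  · exact mul_pos hc (hφ.lt_iff_lt.1 (by rwa [h0]))
  · exact mul_pos_of_neg_of_neg hc (hφ.lt_iff_lt.1 (by rwa [h0]))

theorem interior_max_bound_general
    (Φ : ℝ → ℝ) (hΦconv : StrictConvexOn ℝ Set.univ Φ)
    (hΦdiff : Differentiable ℝ Φ) (hΦ'0 : deriv Φ 0 = 0)
    (f : ℝ → ℝ → ℝ → ℝ)
    (R : ℝ)
    (hsign : ∀ t ∈ Icc (0:ℝ) 1, ∀ x : ℝ, R < |x| → 0 < x * f t x 0)
    (lam : ℝ) (hlam : lam ∈ Ioc (0:ℝ) 1)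
    (u u' : ℝ → ℝ)
    (hu : ∀ t ∈ Icc (0:ℝ) 1, HasDerivWithinAt u (u' t) (Icc (0:ℝ) 1) t)
    (heq : ∀ t ∈ Icc (0:ℝ) 1,
      HasDerivWithinAt (fun s => deriv Φ (u' s)) (lam * f t (u t) (u' t))
        (Icc (0:ℝ) 1) t)
    (t₀ : ℝ) (ht₀ : t₀ ∈ Ioo (0:ℝ) 1)
    (hmax : ∀ t ∈ Icc (0:ℝ) 1, |u t| ≤ |u t₀|) :
    ∀ t ∈ Icc (0:ℝ) 1, |u t| ≤ R := by
  intro t ht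
  refine (hmax t ht).trans (not_lt.1 fun hR => ?_)
  set c := u t₀
  have hsgn : 0 < c * f t₀ c 0 := hsign t₀ (Ioo_subset_Icc_self ht₀) c hR
  have hI : Icc (0:ℝ) 1 ∈ 𝓝 t₀ := Icc_mem_nhds ht₀.1 ht₀.2
  have hderiv : ∀ᶠ s in 𝓝 t₀, HasDerivAt (fun s => c * u s) (c * u' s) s := by
    filter_upwards [isOpen_Ioo.mem_nhds ht₀] with s hs
    exact ((hu s (Ioo_subset_Icc_self hs)).hasDerivAt (Icc_mem_nhds hs.1 hs.2)).const_mul c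
  have hlocmax : IsLocalMax (fun s => c * u s) t₀ := by
    filter_upwards [hI] with s hs
    calc c * u s ≤ |c| * |u s| := (le_abs_self _).trans (abs_mul c _).le
      _ ≤ |c| * |c| := mul_le_mul_of_nonneg_left (hmax s hs) (abs_nonneg c)
      _ = c * c := abs_mul_abs_self c
  have hu'0 : u' t₀ = 0 :=
    (mul_eq_zero.1 (hlocmax.hasDerivAt_eq_zero hderiv.self_of_nhds)).resolve_left
      (left_ne_zero_of_mul hsgn.ne')
  have hΦ'mono : StrictMono (deriv Φ) := fun x y =>
    hΦconv.strictMonoOn_deriv (fun x _ => hΦdiff x) (mem_univ x) (mem_univ y)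
  have hflux : HasDerivAt (fun s => c * deriv Φ (u' s)) (c * (lam * f t₀ c (u' t₀))) t₀ :=
    ((heq t₀ (Ioo_subset_Icc_self ht₀)).hasDerivAt hI).const_mul c
  have hflux_pos : ∀ᶠ s in 𝓝[>] t₀, 0 < c * deriv Φ (u' s) :=
    hflux.hasDerivWithinAt.eventually_nhdsGT_pos (by simp [hu'0, hΦ'0])
      (by rw [hu'0, mul_left_comm]; exact mul_pos hlam.1 hsgn)
  have hincr := eventually_nhdsGT_lt_of_hasDerivAt_pos hderiv
    (hflux_pos.mono fun s hs => hΦ'mono.mul_pos_of_mul_map_pos hΦ'0 hs)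
  obtain ⟨s, hlt, hle⟩ := (hincr.and (hlocmax.filter_mono nhdsWithin_le_nhds)).exists
  exact hlt.not_ge hle

/-- Lemma 4.1: if a solution `u` of `d/dt Φ'(u̇) = λ f(t,u,u̇)` is such that `|u|`
achieves its maximum at an interior point `t₀ ∈ (0,1)`, then `|u(t)| ≤ R` on `[0,1]`. -/
theorem interior_max_bound
    (Φ : ℝ → ℝ) (hΦconv : StrictConvexOn ℝ Set.univ Φ)
    (hΦdiff : Differentiable ℝ Φ) (hΦ'0 : deriv Φ 0 = 0)
    (f : ℝ → ℝ → ℝ → ℝ)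
    (hf : Continuous fun p : ℝ × ℝ × ℝ => f p.1 p.2.1 p.2.2)
    (R : ℝ) (hR : 0 < R)
    (hsign : ∀ t ∈ Icc (0:ℝ) 1, ∀ x : ℝ, R < |x| → 0 < x * f t x 0)
    (lam : ℝ) (hlam : lam ∈ Ioc (0:ℝ) 1)
    (u u' : ℝ → ℝ)
    (hu : ∀ t ∈ Icc (0:ℝ) 1, HasDerivWithinAt u (u' t) (Icc (0:ℝ) 1) t)
    (hu' : ContinuousOn u' (Icc (0:ℝ) 1))
    (heq : ∀ t ∈ Icc (0:ℝ) 1,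
      HasDerivWithinAt (fun s => deriv Φ (u' s)) (lam * f t (u t) (u' t))
        (Icc (0:ℝ) 1) t)
    (t₀ : ℝ) (ht₀ : t₀ ∈ Ioo (0:ℝ) 1)
    (hmax : ∀ t ∈ Icc (0:ℝ) 1, |u t| ≤ |u t₀|) :
    ∀ t ∈ Icc (0:ℝ) 1, |u t| ≤ R :=
  interior_max_bound_general Φ hΦconv hΦdiff hΦ'0 f R hsign lam hlam u u' hu heq t₀ ht₀ hmax
end

section
/- Let Φ : ℝ → ℝ be strictly convex and differentiable with Φ'(0) = 0, let f : [0,1]×ℝ×ℝ → ℝ be continuous and suppose there exists R > 0 such that x·f(t,x,0) > 0 whenever |x| > R. Fix A, B ∈ ℝ and α, β, a, b > 0. Then for every λ ∈ (0,1] and every continuously differentiable u : [0,1] → ℝ such that t ↦ Φ'(u̇(t)) is differentiable on [0,1] with derivative λ·f(t, u(t), u̇(t)), and such that −α·u(0) + β·u̇(0) = A and a·u(1) + b·u̇(1) = B, one has |u(t)| ≤ max{R, |A/α|, |B/a|} for all t ∈ [0,1]. -/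
open Set Filter Topology


lemma slope_nonpos_at_left {u : ℝ → ℝ} {d : ℝ}
    (hd : HasDerivWithinAt u d (Icc (0:ℝ) 1) 0)
    (hmax : ∀ t ∈ Icc (0:ℝ) 1, u t ≤ u 0) : d ≤ 0 := by
  rw [hasDerivWithinAt_iff_tendsto_slope] at hd
  haveI hne1 : (𝓝[Ioc (0:ℝ) 1] 0).NeBot := by
    rw [← mem_closure_iff_nhdsWithin_neBot, closure_Ioc one_ne_zero.symm]
    exact ⟨le_refl 0, zero_le_one⟩
  haveI hne : (𝓝[Icc (0:ℝ) 1 \ {0}] 0).NeBot :=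
    Filter.neBot_of_le (f := 𝓝[Ioc (0:ℝ) 1] 0) (nhdsWithin_mono _
      (fun x hx => ⟨⟨hx.1.le, hx.2⟩, ne_of_gt hx.1⟩))
  exact le_of_tendsto hd (by
    filter_upwards [self_mem_nhdsWithin] with t ht
    have ht0 : (0:ℝ) < t := lt_of_le_of_ne ht.1.1 (Ne.symm ht.2)
    have := hmax t ht.1
    rw [slope_def_field]
    apply div_nonpos_of_nonpos_of_nonneg <;> simp <;> linarith)

lemma slope_nonneg_at_right {u : ℝ → ℝ} {d : ℝ}
    (hd : HasDerivWithinAt u d (Icc (0:ℝ) 1) 1)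
    (hmax : ∀ t ∈ Icc (0:ℝ) 1, u t ≤ u 1) : 0 ≤ d := by
  rw [hasDerivWithinAt_iff_tendsto_slope] at hd
  haveI hne1 : (𝓝[Ico (0:ℝ) 1] 1).NeBot := by
    rw [← mem_closure_iff_nhdsWithin_neBot, closure_Ico one_ne_zero.symm]
    exact ⟨zero_le_one, le_refl 1⟩
  haveI hne : (𝓝[Icc (0:ℝ) 1 \ {1}] 1).NeBot :=
    Filter.neBot_of_le (f := 𝓝[Ico (0:ℝ) 1] 1) (nhdsWithin_mono _
      (fun x hx => ⟨⟨hx.1, hx.2.le⟩, ne_of_lt hx.2⟩))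
  exact ge_of_tendsto hd (by
    filter_upwards [self_mem_nhdsWithin] with t ht
    have ht1 : t < 1 := lt_of_le_of_ne ht.1.2 ht.2
    have := hmax t ht.1
    rw [slope_def_field]
    exact div_nonneg_iff.2 (Or.inr ⟨by linarith, by linarith⟩))

lemma aux_upper_bound
    (Φ : ℝ → ℝ) (hΦconv : StrictConvexOn ℝ Set.univ Φ)
    (hΦdiff : Differentiable ℝ Φ) (hΦ'0 : deriv Φ 0 = 0)
    (f : ℝ → ℝ → ℝ → ℝ)
    (R : ℝ) (hR : 0 < R)
    (hsign : ∀ t ∈ Icc (0:ℝ) 1, ∀ x : ℝ, R < |x| → 0 < x * f t x 0)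
    (A B α β a b : ℝ) (hα : 0 < α) (hβ : 0 < β) (ha : 0 < a) (hb : 0 < b)
    (lam : ℝ) (hlam : lam ∈ Ioc (0:ℝ) 1)
    (u u' : ℝ → ℝ)
    (hu : ∀ t ∈ Icc (0:ℝ) 1, HasDerivWithinAt u (u' t) (Icc (0:ℝ) 1) t)
    (heq : ∀ t ∈ Icc (0:ℝ) 1,
      HasDerivWithinAt (fun s => deriv Φ (u' s)) (lam * f t (u t) (u' t))
        (Icc (0:ℝ) 1) t)
    (hbc0 : -α * u 0 + β * u' 0 = A)
    (hbc1 : a * u 1 + b * u' 1 = B) :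
    ∀ t ∈ Icc (0:ℝ) 1, u t ≤ max R (max |A / α| |B / a|) := by
  set M := max R (max |A / α| |B / a|) with hMdef
  have hRM : R ≤ M := le_max_left _ _
  have hAM : |A / α| ≤ M := le_trans (le_max_left _ _) (le_max_right _ _)
  have hBM : |B / a| ≤ M := le_trans (le_max_right _ _) (le_max_right _ _)
  have hucont : ContinuousOn u (Icc (0:ℝ) 1) := fun t ht => (hu t ht).continuousWithinAt
  obtain ⟨t₀, ht₀, hmax⟩ := isCompact_Icc.exists_isMaxOn (nonempty_Icc.mpr zero_le_one) hucont
  suffices h : u t₀ ≤ M by exact fun t ht => le_trans (hmax ht) h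
  by_contra hcon
  push_neg at hcon
  have hu0pos : 0 < u t₀ := lt_trans (lt_of_lt_of_le hR hRM) hcon
  rcases eq_or_lt_of_le ht₀.1 with h0 | h0
  · -- t₀ = 0
    have hd : u' 0 ≤ 0 := slope_nonpos_at_left (hu 0 (by norm_num)) (by
      intro t ht; rw [h0]; exact hmax ht)
    have hAlt : |A| < α * u 0 := by
      have : |A| / α < u 0 := by
        have := lt_of_le_of_lt hAM hcon
        rwa [abs_div, abs_of_pos hα, ← h0] at this
      rwa [div_lt_iff₀ hα, mul_comm] at this
    nlinarith [neg_abs_le A, mul_nonpos_of_nonneg_of_nonpos hβ.le hd]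
  rcases eq_or_lt_of_le ht₀.2 with h1 | h1
  · -- t₀ = 1
    have hd : 0 ≤ u' 1 := slope_nonneg_at_right (hu 1 (by norm_num)) (by
      intro t ht; rw [← h1]; exact hmax ht)
    have hBlt : |B| < a * u 1 := by
      have : |B| / a < u 1 := by
        have := lt_of_le_of_lt hBM hcon
        rwa [abs_div, abs_of_pos ha, h1] at this
      rwa [div_lt_iff₀ ha, mul_comm] at this
    nlinarith [le_abs_self B, mul_nonneg hb.le hd]
  -- interior
  have hmem : Icc (0:ℝ) 1 ∈ 𝓝 t₀ := Icc_mem_nhds h0 h1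
  have hAt : HasDerivAt u (u' t₀) t₀ := (hu t₀ ht₀).hasDerivAt hmem
  have hloc : IsLocalMax u t₀ := Filter.eventually_of_mem hmem (fun t ht => hmax ht)
  have hu'0 : u' t₀ = 0 := hloc.hasDerivAt_eq_zero hAt
  have hfpos : 0 < f t₀ (u t₀) 0 := by
    have h1' := hsign t₀ ht₀ (u t₀) (by rw [abs_of_pos hu0pos]; exact lt_of_le_of_lt hRM hcon)
    nlinarith
  have hgpos : 0 < lam * f t₀ (u t₀) (u' t₀) := by
    rw [hu'0]; exact mul_pos hlam.1 hfpos
  have hgd := heq t₀ ht₀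
  rw [hasDerivWithinAt_iff_tendsto_slope] at hgd
  have hslope : ∀ᶠ s in 𝓝[Icc (0:ℝ) 1 \ {t₀}] t₀,
      0 < slope (fun s => deriv Φ (u' s)) t₀ s := hgd.eventually (eventually_gt_nhds hgpos)
  obtain ⟨ε, hε, hball⟩ := Metric.mem_nhdsWithin_iff.mp hslope
  set t₁ : ℝ := min (t₀ + ε / 2) ((t₀ + 1) / 2) with ht₁def
  have ht₀t₁ : t₀ < t₁ := lt_min (by linarith) (by linarith)
  have ht₁1 : t₁ < 1 := lt_of_le_of_lt (min_le_right _ _) (by linarith)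
  have ht₁ε : t₁ - t₀ < ε := by
    have : t₁ ≤ t₀ + ε / 2 := min_le_left _ _
    linarith
  have hmono : StrictMono (deriv Φ) := by
    have := hΦconv.strictMonoOn_deriv (fun x _ => (hΦdiff x))
    exact fun x y hxy => this (mem_univ x) (mem_univ y) hxy
  have hu'pos : ∀ s, t₀ < s → s ≤ t₁ → 0 < u' s := by
    intro s hs1 hs2
    have hsIcc : s ∈ Icc (0:ℝ) 1 := ⟨le_trans ht₀.1 (le_of_lt hs1), by linarith⟩
    have hsball : s ∈ Metric.ball t₀ ε := by
      rw [Metric.mem_ball, Real.dist_eq, abs_of_pos (by linarith : (0:ℝ) < s - t₀)]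
      linarith
    have hsl := hball ⟨hsball, hsIcc, ne_of_gt hs1⟩
    simp only [mem_setOf_eq, slope_def_field] at hsl
    have hg0 : deriv Φ (u' t₀) = 0 := by rw [hu'0, hΦ'0]
    have : 0 < deriv Φ (u' s) - deriv Φ (u' t₀) := by
      have hd : (0:ℝ) < s - t₀ := by linarith
      have := mul_pos hsl hd
      rw [div_mul_cancel₀] at this
      · linarith
      · exact ne_of_gt hd
    rw [hg0, sub_zero, ← hΦ'0] at this
    exact hmono.lt_iff_lt.mp this
  obtain ⟨c, hc, hceq⟩ := exists_hasDerivAt_eq_slope u u' ht₀t₁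
    (hucont.mono (fun x hx => ⟨le_trans ht₀.1 hx.1, le_trans hx.2 ht₁1.le⟩))
    (fun x hx => (hu x ⟨le_trans ht₀.1 hx.1.le, by linarith [hx.2]⟩).hasDerivAt
      (Icc_mem_nhds (lt_of_lt_of_le h0 (le_of_lt hx.1)) (lt_trans hx.2 ht₁1)))
  have hcpos := hu'pos c hc.1 hc.2.le
  rw [hceq] at hcpos
  have : u t₀ < u t₁ := by
    have hd : (0:ℝ) < t₁ - t₀ := by linarith
    nlinarith [mul_pos hcpos hd, div_mul_cancel₀ (u t₁ - u t₀) (ne_of_gt hd)]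
  have h2 : u t₁ ≤ u t₀ := hmax (⟨le_trans ht₀.1 ht₀t₁.le, ht₁1.le⟩ : t₁ ∈ Icc (0:ℝ) 1)
  linarith


/-- A priori bound for `u`, Sturm–Liouville case: any solution of
`d/dt Φ'(u̇) = λ f(t,u,u̇)` with `−α u(0) + β u̇(0) = A`, `a u(1) + b u̇(1) = B`
satisfies `|u(t)| ≤ max {R, |A/α|, |B/a|}` on `[0,1]`. -/
theorem apriori_bound_sturm_liouville
    (Φ : ℝ → ℝ) (hΦconv : StrictConvexOn ℝ Set.univ Φ)
    (hΦdiff : Differentiable ℝ Φ) (hΦ'0 : deriv Φ 0 = 0)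
    (f : ℝ → ℝ → ℝ → ℝ)
    (hf : Continuous fun p : ℝ × ℝ × ℝ => f p.1 p.2.1 p.2.2)
    (R : ℝ) (hR : 0 < R)
    (hsign : ∀ t ∈ Icc (0:ℝ) 1, ∀ x : ℝ, R < |x| → 0 < x * f t x 0)
    (A B α β a b : ℝ) (hα : 0 < α) (hβ : 0 < β) (ha : 0 < a) (hb : 0 < b)
    (lam : ℝ) (hlam : lam ∈ Ioc (0:ℝ) 1)
    (u u' : ℝ → ℝ)
    (hu : ∀ t ∈ Icc (0:ℝ) 1, HasDerivWithinAt u (u' t) (Icc (0:ℝ) 1) t)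
    (hu' : ContinuousOn u' (Icc (0:ℝ) 1))
    (heq : ∀ t ∈ Icc (0:ℝ) 1,
      HasDerivWithinAt (fun s => deriv Φ (u' s)) (lam * f t (u t) (u' t))
        (Icc (0:ℝ) 1) t)
    (hbc0 : -α * u 0 + β * u' 0 = A)
    (hbc1 : a * u 1 + b * u' 1 = B) :
    ∀ t ∈ Icc (0:ℝ) 1, |u t| ≤ max R (max |A / α| |B / a|) := by
  have hupper := aux_upper_bound Φ hΦconv hΦdiff hΦ'0 f R hR hsign A B α β a b hα hβ ha hb
    lam hlam u u' hu heq hbc0 hbc1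
  -- transformed system for -u
  set Ψ : ℝ → ℝ := fun x => Φ (-x) with hΨdef
  set g : ℝ → ℝ → ℝ → ℝ := fun t x y => -f t (-x) (-y) with hgdef
  have hΨconv : StrictConvexOn ℝ Set.univ Ψ := by
    refine ⟨convex_univ, fun x _ y _ hxy p q hp hq hpq => ?_⟩
    have hxy' : (-x : ℝ) ≠ -y := fun h => hxy (neg_injective h)
    have := hΦconv.2 (mem_univ (-x)) (mem_univ (-y)) hxy' hp hq hpq
    simp only [hΨdef, smul_eq_mul] at *
    convert this using 2
    ring
  have hΨdiff : Differentiable ℝ Ψ := hΦdiff.comp differentiable_neg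
  have hderivΨ : ∀ x : ℝ, deriv Ψ x = -deriv Φ (-x) := by
    intro x
    have h : HasDerivAt Ψ (deriv Φ (-x) * (-1)) x :=
      ((hΦdiff (-x)).hasDerivAt).comp x (hasDerivAt_neg x)
    rw [h.deriv]; ring
  have hΨ'0 : deriv Ψ 0 = 0 := by rw [hderivΨ, neg_zero, hΦ'0, neg_zero]
  have hsign' : ∀ t ∈ Icc (0:ℝ) 1, ∀ x : ℝ, R < |x| → 0 < x * g t x 0 := by
    intro t ht x hx
    have := hsign t ht (-x) (by rwa [abs_neg])
    simp only [hgdef, neg_zero]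
    nlinarith
  have hv : ∀ t ∈ Icc (0:ℝ) 1,
      HasDerivWithinAt (fun s => -u s) (-u' t) (Icc (0:ℝ) 1) t :=
    fun t ht => (hu t ht).neg
  have heq' : ∀ t ∈ Icc (0:ℝ) 1,
      HasDerivWithinAt (fun s => deriv Ψ (-u' s))
        (lam * g t (-u t) (-u' t)) (Icc (0:ℝ) 1) t := by
    intro t ht
    have h1 : HasDerivWithinAt (fun s => -(deriv Φ (u' s)))
        (-(lam * f t (u t) (u' t))) (Icc (0:ℝ) 1) t := (heq t ht).neg
    have h2 : (fun s => deriv Ψ (-u' s)) = fun s => -(deriv Φ (u' s)) := by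
      funext s; rw [hderivΨ, neg_neg]
    rw [h2]
    convert h1 using 1
    simp only [hgdef, neg_neg]
    ring
  have hbc0' : -α * (-u 0) + β * (-u' 0) = -A := by linarith
  have hbc1' : a * (-u 1) + b * (-u' 1) = -B := by linarith
  have hlower := aux_upper_bound Ψ hΨconv hΨdiff hΨ'0 g R hR hsign' (-A) (-B) α β a b
    hα hβ ha hb lam hlam (fun s => -u s) (fun s => -u' s) hv heq' hbc0' hbc1'
  intro t ht
  have h1 := hupper t ht
  have h2 := hlower t ht
  rw [neg_div, abs_neg, neg_div, abs_neg] at h2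
  rw [abs_le]
  constructor <;> linarith
end

section
/- Let u : [0,1] → ℝ be continuously differentiable, let λ ∈ (0,1], and suppose u satisfies the Sturm–Liouville boundary conditions −α·u(0) + β·u̇(0) = A and a·u(1) + b·u̇(1) = B with α, β, a, b > 0. If the function |u| achieves its maximum over [0,1] at the point 0, then u(0)·u̇(0) ≤ 0 and consequently |u(0)| ≤ |A/α|; similarly, if |u| achieves its maximum at the point 1, then |u(1)| ≤ |B/a|. -/
/-!
At a maximum point `p` of `|u|` on `[0,1]`, the function `u²` is maximal too, so its derivative
`2 u(p) u̇(p)` cannot be positive in any direction pointing into the interval: `u(0) u̇(0) ≤ 0` and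
`u(1) u̇(1) ≥ 0`. Multiplying the boundary condition by `u(p)` then gives `α u(0)² ≤ -u(0) A` and
`a u(1)² ≤ u(1) B`, hence the bounds.
-/

open Set Filter Topology

theorem HasDerivWithinAt.mul_sub_nonpos_of_isMaxOn {g : ℝ → ℝ} {g' : ℝ} {s : Set ℝ} {p q : ℝ}
    (hs : Convex ℝ s) (hp : p ∈ s) (hq : q ∈ s) (hg : HasDerivWithinAt g g' s p)
    (hmax : IsMaxOn g s p) : (q - p) * g' ≤ 0 := by
  have hcone : q - p ∈ posTangentConeAt s p :=
    sub_mem_posTangentConeAt_of_segment_subset (hs.segment_subset hp hq)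
  simpa [mul_comm] using hmax.localize.hasFDerivWithinAt_nonpos hg.hasFDerivWithinAt hcone

theorem HasDerivWithinAt.mul_sub_mul_nonpos_of_isMaxOn_abs {u : ℝ → ℝ} {u' : ℝ} {s : Set ℝ}
    {p q : ℝ} (hs : Convex ℝ s) (hp : p ∈ s) (hq : q ∈ s) (hu : HasDerivWithinAt u u' s p)
    (hmax : ∀ t ∈ s, |u t| ≤ |u p|) : (q - p) * (u p * u') ≤ 0 := by
  have hsq_max : IsMaxOn (fun t => u t * u t) s p := fun t ht => by
    show u t * u t ≤ u p * u p
    simpa only [abs_mul_abs_self] using mul_self_le_mul_self (abs_nonneg _) (hmax t ht)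
  have := (hu.mul hu).mul_sub_nonpos_of_isMaxOn hs hp hq hsq_max
  nlinarith

theorem abs_le_abs_div_of_mul_nonneg {x y α β A : ℝ} (hα : 0 < α) (hβ : 0 ≤ β)
    (hxy : 0 ≤ x * y) (hA : α * x + β * y = A) : |x| ≤ |A / α| := by
  have hsq : α * (|x| * |x|) ≤ |x| * |A| := by
    calc α * (|x| * |x|) = α * (x * x) := by rw [abs_mul_abs_self]
      _ ≤ x * A := by rw [← hA]; nlinarith [mul_nonneg hβ hxy]
      _ ≤ |x * A| := le_abs_self _
      _ = |x| * |A| := abs_mul _ _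
  rw [abs_div, abs_of_pos hα, le_div_iff₀ hα]
  rcases (abs_nonneg x).eq_or_lt with hx | hx
  · rw [← hx]; simp
  · nlinarith

theorem sturm_liouville_boundary_estimates_general
    (u u' : ℝ → ℝ)
    (hu : ∀ t ∈ Icc (0:ℝ) 1, HasDerivWithinAt u (u' t) (Icc (0:ℝ) 1) t)
    (A B α β a b : ℝ) (hα : 0 < α) (hβ : 0 < β) (ha : 0 < a) (hb : 0 < b)
    (hbc0 : -α * u 0 + β * u' 0 = A)
    (hbc1 : a * u 1 + b * u' 1 = B) :
    ((∀ t ∈ Icc (0:ℝ) 1, |u t| ≤ |u 0|) → u 0 * u' 0 ≤ 0 ∧ |u 0| ≤ |A / α|) ∧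
    ((∀ t ∈ Icc (0:ℝ) 1, |u t| ≤ |u 1|) → |u 1| ≤ |B / a|) := by
  have h0 : (0:ℝ) ∈ Icc (0:ℝ) 1 := left_mem_Icc.2 zero_le_one
  have h1 : (1:ℝ) ∈ Icc (0:ℝ) 1 := right_mem_Icc.2 zero_le_one
  constructor
  · intro hmax
    have hsign : u 0 * u' 0 ≤ 0 := by
      simpa using (hu 0 h0).mul_sub_mul_nonpos_of_isMaxOn_abs (convex_Icc 0 1) h0 h1 hmax
    refine ⟨hsign, ?_⟩
    simpa using abs_le_abs_div_of_mul_nonneg hα hβ.le (by linarith : 0 ≤ -u 0 * u' 0)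
      (by linarith : α * -u 0 + β * u' 0 = A)
  · intro hmax
    have hsign : 0 ≤ u 1 * u' 1 := by
      simpa using (hu 1 h1).mul_sub_mul_nonpos_of_isMaxOn_abs (convex_Icc 0 1) h1 h0 hmax
    exact abs_le_abs_div_of_mul_nonneg ha hb.le hsign hbc1

/-- Boundary estimates in the Sturm–Liouville case: if `|u|` achieves its maximum
over `[0,1]` at `0` then `u(0)·u̇(0) ≤ 0` and `|u(0)| ≤ |A/α|`; if it achieves its
maximum at `1` then `|u(1)| ≤ |B/a|`. -/
theorem sturm_liouville_boundary_estimates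
    (u u' : ℝ → ℝ)
    (hu : ∀ t ∈ Icc (0:ℝ) 1, HasDerivWithinAt u (u' t) (Icc (0:ℝ) 1) t)
    (hu' : ContinuousOn u' (Icc (0:ℝ) 1))
    (lam : ℝ) (hlam : lam ∈ Ioc (0:ℝ) 1)
    (A B α β a b : ℝ) (hα : 0 < α) (hβ : 0 < β) (ha : 0 < a) (hb : 0 < b)
    (hbc0 : -α * u 0 + β * u' 0 = A)
    (hbc1 : a * u 1 + b * u' 1 = B) :
    ((∀ t ∈ Icc (0:ℝ) 1, |u t| ≤ |u 0|) → u 0 * u' 0 ≤ 0 ∧ |u 0| ≤ |A / α|) ∧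
    ((∀ t ∈ Icc (0:ℝ) 1, |u t| ≤ |u 1|) → |u 1| ≤ |B / a|) :=
  sturm_liouville_boundary_estimates_general u u' hu A B α β a b hα hβ ha hb hbc0 hbc1
end

section
/- Let Φ : ℝ → ℝ be strictly convex and differentiable with Φ(0) = Φ'(0) = 0 and suppose there is a constant k_Φ > 1 with k_Φ·Φ(x) ≤ Φ'(x)·x for all x ∈ ℝ and Φ(x)/|x| → ∞ as |x| → ∞. Let f : [0,1]×ℝ×ℝ → ℝ be continuous and suppose there exist positive functions S, T : [0,1]×ℝ → ℝ, bounded on bounded sets, with |f(t,x,v)| ≤ S(t,x)·(Φ'(v)·v − Φ(v)) + T(t,x) for all (t,x,v). Then for every r₀ > 0 there exists a constant r₁ > 0, depending only on r₀, S, T and Φ (and in particular independent of λ and u), such that: for every λ ∈ [0,1] and every continuously differentiable u : [0,1] → ℝ with t ↦ Φ'(u̇(t)) differentiable on [0,1] with derivative λ·f(t, u(t), u̇(t)), if |u(t)| ≤ r₀ for all t ∈ [0,1], then |u̇(t)| ≤ r₁ for all t ∈ [0,1]. -/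
open Set Filter Topology



private lemma legendre_hasDerivAt {Φ g F : ℝ → ℝ} (hgc : Continuous g)
    (hFval : ∀ y : ℝ, F y = y * g y - Φ (g y))
    (hFsup : ∀ x y : ℝ, y * x - Φ x ≤ F y) (y : ℝ) :
    HasDerivAt F (g y) y := by
  rw [hasDerivAt_iff_tendsto_slope]
  have hlow : ∀ z : ℝ, g y * (z - y) ≤ F z - F y := by
    intro z
    have h1 := hFsup (g y) z
    have h2 : g y * (z - y) = z * g y - y * g y := by ring
    rw [hFval y, h2]; linarith
  have hupp : ∀ z : ℝ, F z - F y ≤ g z * (z - y) := by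
    intro z
    have h1 := hFsup (g z) y
    have h2 : g z * (z - y) = z * g z - y * g z := by ring
    rw [hFval z, h2]; linarith
  have hbound : ∀ z : ℝ, z ≠ y →
      min (g y) (g z) ≤ slope F y z ∧ slope F y z ≤ max (g y) (g z) := by
    intro z hzy
    rcases lt_or_gt_of_ne hzy with h | h
    · have hneg : z - y < 0 := by linarith
      constructor
      · refine le_trans (min_le_right _ _) ?_
        rw [slope_def_field]
        exact (le_div_iff_of_neg hneg).mpr (hupp z)
      · refine le_trans ?_ (le_max_left _ _)
        rw [slope_def_field]
        exact (div_le_iff_of_neg hneg).mpr (hlow z)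
    · have hpos : (0:ℝ) < z - y := by linarith
      constructor
      · refine le_trans (min_le_left _ _) ?_
        rw [slope_def_field]
        exact (le_div_iff₀ hpos).mpr (hlow z)
      · refine le_trans ?_ (le_max_right _ _)
        rw [slope_def_field]
        exact (div_le_iff₀ hpos).mpr (hupp z)
  have hminT : Tendsto (fun z => min (g y) (g z)) (𝓝[≠] y) (𝓝 (g y)) := by
    have h0 : Continuous (fun z => min (g y) (g z)) := continuous_const.min hgc
    have := (h0.tendsto y).mono_left (nhdsWithin_le_nhds : 𝓝[≠] y ≤ 𝓝 y)
    simpa using this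
  have hmaxT : Tendsto (fun z => max (g y) (g z)) (𝓝[≠] y) (𝓝 (g y)) := by
    have h0 : Continuous (fun z => max (g y) (g z)) := continuous_const.max hgc
    have := (h0.tendsto y).mono_left (nhdsWithin_le_nhds : 𝓝[≠] y ≤ 𝓝 y)
    simpa using this
  refine tendsto_of_tendsto_of_tendsto_of_le_of_le' hminT hmaxT ?_ ?_
  · filter_upwards [self_mem_nhdsWithin] with z hz using (hbound z hz).1
  · filter_upwards [self_mem_nhdsWithin] with z hz using (hbound z hz).2

private lemma gronwall_mono {a b CS : ℝ} {η η' u u' : ℝ → ℝ} (hab : a ≤ b) (hCS : 0 ≤ CS)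
    (hη : ∀ s ∈ Icc a b, HasDerivWithinAt η (η' s) (Icc a b) s)
    (hu : ∀ s ∈ Icc a b, HasDerivWithinAt u (u' s) (Icc a b) s)
    (hbd : ∀ s ∈ Ioo a b, |η' s| ≤ CS * |u' s|)
    (hsign : ∀ s ∈ Ioo a b, 0 ≤ u' s) :
    |η b - η a| ≤ CS * (u b - u a) := by
  have hint : interior (Icc a b) = Ioo a b := interior_Icc
  have hcontη : ContinuousOn η (Icc a b) := fun s hs => (hη s hs).continuousWithinAt
  have hcontu : ContinuousOn u (Icc a b) := fun s hs => (hu s hs).continuousWithinAt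
  have hd : ∀ s ∈ Ioo a b, HasDerivWithinAt η (η' s) (Ioo a b) s :=
    fun s hs => (hη s (Ioo_subset_Icc_self hs)).mono Ioo_subset_Icc_self
  have hdu : ∀ s ∈ Ioo a b, HasDerivWithinAt u (u' s) (Ioo a b) s :=
    fun s hs => (hu s (Ioo_subset_Icc_self hs)).mono Ioo_subset_Icc_self
  have habs : ∀ s ∈ Ioo a b, |u' s| = u' s := fun s hs => abs_of_nonneg (hsign s hs)
  have humono : MonotoneOn u (Icc a b) := by
    apply monotoneOn_of_hasDerivWithinAt_nonneg (convex_Icc a b) hcontu (f' := u')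
    · simp only [hint]; exact hdu
    · simp only [hint]; exact hsign
  have h1 : MonotoneOn (fun s => η s + CS * u s) (Icc a b) := by
    apply monotoneOn_of_hasDerivWithinAt_nonneg (convex_Icc a b)
      (hcontη.add (continuousOn_const.mul hcontu)) (f' := fun s => η' s + CS * u' s)
    · simp only [hint]
      exact fun s hs => (hd s hs).add ((hdu s hs).const_mul CS)
    · simp only [hint]
      intro s hs
      have h1 := hbd s hs
      rw [habs s hs] at h1
      have h2 := neg_abs_le (η' s)
      linarith
  have h2 : AntitoneOn (fun s => η s - CS * u s) (Icc a b) := by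
    apply antitoneOn_of_hasDerivWithinAt_nonpos (convex_Icc a b)
      (hcontη.sub (continuousOn_const.mul hcontu)) (f' := fun s => η' s - CS * u' s)
    · simp only [hint]
      exact fun s hs => (hd s hs).sub ((hdu s hs).const_mul CS)
    · simp only [hint]
      intro s hs
      have h1 := hbd s hs
      rw [habs s hs] at h1
      have h2 := le_abs_self (η' s)
      linarith
  have ha' : a ∈ Icc a b := left_mem_Icc.mpr hab
  have hb' : b ∈ Icc a b := right_mem_Icc.mpr hab
  have e1 := h1 ha' hb' hab
  have e2 := h2 ha' hb' hab
  have e3 := humono ha' hb' hab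
  dsimp only at e1 e2
  have hring : CS * (u b - u a) = CS * u b - CS * u a := by ring
  rw [abs_le]
  constructor <;> linarith

private lemma gronwall_anti {a b CS : ℝ} {η η' u u' : ℝ → ℝ} (hab : a ≤ b) (hCS : 0 ≤ CS)
    (hη : ∀ s ∈ Icc a b, HasDerivWithinAt η (η' s) (Icc a b) s)
    (hu : ∀ s ∈ Icc a b, HasDerivWithinAt u (u' s) (Icc a b) s)
    (hbd : ∀ s ∈ Ioo a b, |η' s| ≤ CS * |u' s|)
    (hsign : ∀ s ∈ Ioo a b, u' s ≤ 0) :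
    |η b - η a| ≤ CS * (u a - u b) := by
  have h := gronwall_mono (u := fun s => -u s) (u' := fun s => -u' s) hab hCS hη
    (fun s hs => (hu s hs).neg)
    (by intro s hs; simpa [abs_neg] using hbd s hs)
    (fun s hs => neg_nonneg.mpr (hsign s hs))
  calc |η b - η a| ≤ CS * (-u b - -u a) := h
    _ = CS * (u a - u b) := by ring

private lemma sign_const_left {v : ℝ → ℝ} {a b r : ℝ} (hr : 0 < r)
    (hcont : ContinuousOn v (Icc a b)) (hbig : ∀ s ∈ Ico a b, r < |v s|)
    (hpos : r < v a) : ∀ s ∈ Ico a b, r < v s := by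
  intro s hs
  by_contra hle
  push_neg at hle
  have hneg : v s < -r := by
    have h := hbig s hs
    rcases abs_cases (v s) with ⟨h1, _⟩ | ⟨h1, _⟩ <;> linarith
  have hsub : Icc a s ⊆ Icc a b := Icc_subset_Icc le_rfl hs.2.le
  have hiv := intermediate_value_Icc' hs.1 (hcont.mono hsub)
  have hmem : r ∈ Icc (v s) (v a) := ⟨by linarith, hpos.le⟩
  obtain ⟨s₁, hs₁, hv₁⟩ := hiv hmem
  have h := hbig s₁ ⟨hs₁.1, lt_of_le_of_lt hs₁.2 hs.2⟩
  rw [hv₁, abs_of_pos hr] at h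
  exact lt_irrefl _ h

private lemma sign_const_right {v : ℝ → ℝ} {a b r : ℝ} (hr : 0 < r)
    (hcont : ContinuousOn v (Icc a b)) (hbig : ∀ s ∈ Ioc a b, r < |v s|)
    (hpos : r < v b) : ∀ s ∈ Ioc a b, r < v s := by
  intro s hs
  by_contra hle
  push_neg at hle
  have hneg : v s < -r := by
    have h := hbig s hs
    rcases abs_cases (v s) with ⟨h1, _⟩ | ⟨h1, _⟩ <;> linarith
  have hsub : Icc s b ⊆ Icc a b := Icc_subset_Icc hs.1.le le_rfl
  have hiv := intermediate_value_Icc hs.2 (hcont.mono hsub)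
  have hmem : r ∈ Icc (v s) (v b) := ⟨by linarith, hpos.le⟩
  obtain ⟨s₁, hs₁, hv₁⟩ := hiv hmem
  have h := hbig s₁ ⟨lt_of_lt_of_le hs.1 hs₁.1, hs₁.2⟩
  rw [hv₁, abs_of_pos hr] at h
  exact lt_irrefl _ h



set_option maxHeartbeats 1000000 in
/-- A priori bound for `u̇`: there is a constant `r₁ > 0`, depending only on
`r₀`, `S`, `T` and `Φ` (independent of `λ` and `u`), such that every solution of
`d/dt Φ'(u̇) = λ f(t,u,u̇)` with `|u| ≤ r₀` on `[0,1]` satisfies `|u̇| ≤ r₁`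
on `[0,1]`. -/
theorem apriori_bound_derivative
    (Φ : ℝ → ℝ) (hΦconv : StrictConvexOn ℝ Set.univ Φ)
    (hΦdiff : Differentiable ℝ Φ)
    (hΦ0 : Φ 0 = 0) (hΦ'0 : deriv Φ 0 = 0)
    (kΦ : ℝ) (hkΦ : 1 < kΦ)
    (hΦgrow : ∀ x : ℝ, kΦ * Φ x ≤ deriv Φ x * x)
    (hΦcoerc : Tendsto (fun x => Φ x / |x|) (cocompact ℝ) atTop)
    (f : ℝ → ℝ → ℝ → ℝ)
    (hf : Continuous fun p : ℝ × ℝ × ℝ => f p.1 p.2.1 p.2.2)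
    (S T : ℝ → ℝ → ℝ)
    (hSpos : ∀ t ∈ Icc (0:ℝ) 1, ∀ x : ℝ, 0 < S t x)
    (hTpos : ∀ t ∈ Icc (0:ℝ) 1, ∀ x : ℝ, 0 < T t x)
    (hSbdd : ∀ M : ℝ, ∃ C : ℝ, ∀ t ∈ Icc (0:ℝ) 1, ∀ x : ℝ, |x| ≤ M → S t x ≤ C)
    (hTbdd : ∀ M : ℝ, ∃ C : ℝ, ∀ t ∈ Icc (0:ℝ) 1, ∀ x : ℝ, |x| ≤ M → T t x ≤ C)
    (hgrowth : ∀ t ∈ Icc (0:ℝ) 1, ∀ x v : ℝ,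
      |f t x v| ≤ S t x * (deriv Φ v * v - Φ v) + T t x)
    (r₀ : ℝ) (hr₀ : 0 < r₀) :
    ∃ r₁ : ℝ, 0 < r₁ ∧
      ∀ lam ∈ Icc (0:ℝ) 1, ∀ u u' : ℝ → ℝ,
        (∀ t ∈ Icc (0:ℝ) 1, HasDerivWithinAt u (u' t) (Icc (0:ℝ) 1) t) →
        ContinuousOn u' (Icc (0:ℝ) 1) →
        (∀ t ∈ Icc (0:ℝ) 1,
          HasDerivWithinAt (fun s => deriv Φ (u' s)) (lam * f t (u t) (u' t))
            (Icc (0:ℝ) 1) t) →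
        (∀ t ∈ Icc (0:ℝ) 1, |u t| ≤ r₀) →
        ∀ t ∈ Icc (0:ℝ) 1, |u' t| ≤ r₁ := by
  classical
  have hφdiff : ∀ x : ℝ, DifferentiableAt ℝ Φ x := fun x => hΦdiff x
  have hφmono : StrictMono (deriv Φ) :=
    strictMonoOn_univ.1 (hΦconv.strictMonoOn_deriv (fun x _ => hφdiff x))
  -- support line inequality
  have hsupp : ∀ a b : ℝ, Φ b + deriv Φ b * (a - b) ≤ Φ a := by
    intro a b
    rcases lt_trichotomy a b with h | h | h
    · have h1 := hΦconv.convexOn.slope_le_deriv (mem_univ a) (mem_univ b) h (hφdiff b)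
      rw [slope_def_field] at h1
      have hba : (0:ℝ) < b - a := by linarith
      have h2 := (div_le_iff₀ hba).mp h1
      nlinarith
    · subst h; simp
    · have h1 := hΦconv.convexOn.deriv_le_slope (mem_univ b) (mem_univ a) h (hφdiff b)
      rw [slope_def_field] at h1
      have hab : (0:ℝ) < a - b := by linarith
      have h2 := (le_div_iff₀ hab).mp h1
      nlinarith
  have hΦnonneg : ∀ v : ℝ, 0 ≤ Φ v := by
    intro v
    have h := hsupp v 0
    rw [hΦ0, hΦ'0] at h
    simpa using h
  have hΨnonneg : ∀ v : ℝ, 0 ≤ deriv Φ v * v - Φ v := by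
    intro v
    have h := hsupp 0 v
    rw [hΦ0] at h
    nlinarith
  -- unboundedness of deriv Φ
  have htop : Tendsto (fun x => Φ x / |x|) atTop atTop :=
    hΦcoerc.mono_left (by rw [cocompact_eq_atBot_atTop]; exact le_sup_right)
  have hbot : Tendsto (fun x => Φ x / |x|) atBot atTop :=
    hΦcoerc.mono_left (by rw [cocompact_eq_atBot_atTop]; exact le_sup_left)
  have hφtop : ∀ y : ℝ, ∃ b : ℝ, y < deriv Φ b := by
    intro y
    obtain ⟨x, hx⟩ := ((htop.eventually_ge_atTop (|y| + 1)).and (eventually_ge_atTop (1:ℝ))).exists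
    obtain ⟨hx2, hx1⟩ := hx
    have hxpos : (0:ℝ) < x := by linarith
    rw [abs_of_pos hxpos] at hx2
    have h4 : (|y| + 1) * x ≤ Φ x := (le_div_iff₀ hxpos).mp hx2
    have h3 : Φ x ≤ deriv Φ x * x := by nlinarith [hΨnonneg x, hΦnonneg x]
    refine ⟨x, ?_⟩
    nlinarith [le_abs_self y]
  have hφbot : ∀ y : ℝ, ∃ a : ℝ, deriv Φ a < y := by
    intro y
    obtain ⟨x, hx⟩ := ((hbot.eventually (eventually_ge_atTop (|y| + 1))).and (eventually_le_atBot (-1:ℝ))).exists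
    obtain ⟨hx2, hx1⟩ := hx
    have hxneg : x < 0 := by linarith
    rw [abs_of_neg hxneg] at hx2
    have hnx : (0:ℝ) < -x := by linarith
    have h4 : (|y| + 1) * (-x) ≤ Φ x := (le_div_iff₀ hnx).mp hx2
    have h3 : Φ x ≤ deriv Φ x * x := by nlinarith [hΨnonneg x]
    refine ⟨x, ?_⟩
    nlinarith [neg_abs_le y]
  have hφsurj : Function.Surjective (deriv Φ) := by
    intro y
    obtain ⟨a, ha⟩ := hφbot y
    obtain ⟨b, hb⟩ := hφtop y
    have hab : a < b := hφmono.lt_iff_lt.mp (lt_trans ha hb)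
    obtain ⟨c, _, hc⟩ := exists_hasDerivWithinAt_eq_of_gt_of_lt hab.le
      (fun x _ => (hφdiff x).hasDerivAt.hasDerivWithinAt) ha hb
    exact ⟨c, hc⟩
  set e : ℝ ≃o ℝ := StrictMono.orderIsoOfSurjective (deriv Φ) hφmono hφsurj with he
  set g : ℝ → ℝ := fun y => e.symm y with hg
  have hge : ∀ v : ℝ, g (deriv Φ v) = v := fun v =>
    StrictMono.orderIsoOfSurjective_symm_apply_self (deriv Φ) hφmono hφsurj v
  have heg : ∀ y : ℝ, deriv Φ (g y) = y := fun y =>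
    StrictMono.orderIsoOfSurjective_self_symm_apply (deriv Φ) hφmono hφsurj y
  have hgc : Continuous g := (OrderIso.continuous e.symm)
  have hφc : Continuous (deriv Φ) := by
    have : Continuous e := OrderIso.continuous e
    have hcoe : (e : ℝ → ℝ) = deriv Φ := by
      rw [he]; exact StrictMono.coe_orderIsoOfSurjective (deriv Φ) hφmono hφsurj
    rwa [hcoe] at this
  set F : ℝ → ℝ := fun y => y * g y - Φ (g y) with hF
  have hFsup : ∀ x y : ℝ, y * x - Φ x ≤ F y := by
    intro x y
    have h := hsupp x (g y)
    rw [heg y] at h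
    have h2 : y * (x - g y) = y * x - y * g y := by ring
    rw [h2] at h
    simp only [hF]
    linarith
  have hFd : ∀ y : ℝ, HasDerivAt F (g y) y :=
    legendre_hasDerivAt hgc (fun y => rfl) hFsup
  -- constants
  obtain ⟨CS₀, hCS₀⟩ := hSbdd r₀
  obtain ⟨CT₀, hCT₀⟩ := hTbdd r₀
  set CS : ℝ := max CS₀ 1 with hCSdef
  set CT : ℝ := max CT₀ 1 with hCTdef
  have hCS1 : (1:ℝ) ≤ CS := le_max_right _ _
  have hCT1 : (1:ℝ) ≤ CT := le_max_right _ _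
  have hCSpos : (0:ℝ) < CS := by linarith
  have hCTpos : (0:ℝ) < CT := by linarith
  have hCS : ∀ t ∈ Icc (0:ℝ) 1, ∀ x : ℝ, |x| ≤ r₀ → S t x ≤ CS :=
    fun t ht x hx => (hCS₀ t ht x hx).trans (le_max_left _ _)
  have hCT : ∀ t ∈ Icc (0:ℝ) 1, ∀ x : ℝ, |x| ≤ r₀ → T t x ≤ CT :=
    fun t ht x hx => (hCT₀ t ht x hx).trans (le_max_left _ _)
  -- bound for Ψ on [-2r₀, 2r₀]
  have hΨcont : Continuous (fun v : ℝ => deriv Φ v * v - Φ v) :=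
    (hφc.mul continuous_id).sub hΦdiff.continuous
  obtain ⟨v₀, _, hv₀⟩ := isCompact_Icc.exists_isMaxOn (α := ℝ)
    (nonempty_Icc.mpr (by linarith : (-(2*r₀) : ℝ) ≤ 2*r₀))
    hΨcont.continuousOn
  set B : ℝ := max (deriv Φ v₀ * v₀ - Φ v₀) 0 with hBdef
  have hBnn : 0 ≤ B := le_max_right _ _
  have hB : ∀ v : ℝ, |v| ≤ 2*r₀ → deriv Φ v * v - Φ v ≤ B := by
    intro v hv
    have hvmem : v ∈ Icc (-(2*r₀)) (2*r₀) := by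
      rcases abs_le.mp hv with ⟨h1, h2⟩; exact ⟨by linarith, h2⟩
    exact (hv₀ hvmem).trans (le_max_left _ _)
  set E : ℝ := (CS * B + CT) * Real.exp (CS * (2 * r₀)) with hEdef
  have hEpos : 0 < E := by
    apply mul_pos _ (Real.exp_pos _)
    nlinarith
  set K : ℝ := E / CS with hKdef
  have hKpos : 0 < K := div_pos hEpos hCSpos
  -- coercivity radius
  obtain ⟨R, hRprop⟩ : ∃ R : ℝ, ∀ v : ℝ, R ≤ |v| → K < (kΦ - 1) * Φ v := by
    have hc : (0:ℝ) < K / (kΦ - 1) + 1 := by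
      have : (0:ℝ) < K / (kΦ - 1) := div_pos hKpos (by linarith)
      linarith
    have hev := hΦcoerc.eventually (eventually_ge_atTop (K / (kΦ - 1) + 1))
    rw [eventually_iff, mem_cocompact] at hev
    obtain ⟨K₀, hK₀c, hK₀⟩ := hev
    obtain ⟨R₀, hR₀⟩ := hK₀c.isBounded.subset_closedBall 0
    refine ⟨max R₀ 0 + 1, fun v hv => ?_⟩
    have hvnot : v ∉ K₀ := by
      intro hmem
      have := hR₀ hmem
      rw [Metric.mem_closedBall, Real.dist_eq, sub_zero] at this
      have h1 : R₀ ≤ max R₀ 0 := le_max_left _ _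
      linarith
    have h2 : K / (kΦ - 1) + 1 ≤ Φ v / |v| := hK₀ hvnot
    have hvpos : (0:ℝ) < |v| := by
      have : (0:ℝ) ≤ max R₀ 0 := le_max_right _ _
      linarith
    have h3 : (K / (kΦ - 1) + 1) * |v| ≤ Φ v := (le_div_iff₀ hvpos).mp h2
    have h4 : (1:ℝ) ≤ |v| := by
      have : (0:ℝ) ≤ max R₀ 0 := le_max_right _ _
      linarith
    have h5 : (K / (kΦ - 1) + 1) ≤ Φ v := by nlinarith
    have h6 : (kΦ - 1) * (K / (kΦ - 1)) = K := mul_div_cancel₀ _ (by linarith : kΦ - 1 ≠ 0)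
    nlinarith
  refine ⟨max R (2 * r₀) + 1, by positivity, ?_⟩
  intro lam hlam u u' hu hu'c hw hubd
  set ψ : ℝ → ℝ := fun s => F (deriv Φ (u' s)) with hψdef
  have hψeq : ∀ s : ℝ, ψ s = deriv Φ (u' s) * u' s - Φ (u' s) := by
    intro s
    simp only [hψdef, hF, hge]
  have hψd : ∀ s ∈ Icc (0:ℝ) 1,
      HasDerivWithinAt ψ (u' s * (lam * f s (u s) (u' s))) (Icc (0:ℝ) 1) s := by
    intro s hs
    have h1 := (hFd (deriv Φ (u' s))).comp_hasDerivWithinAt s (hw s hs)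
    rw [hge (u' s)] at h1
    exact h1
  have hψnn : ∀ s : ℝ, 0 ≤ ψ s := fun s => by rw [hψeq s]; exact hΨnonneg _
  have hpos : ∀ s : ℝ, 0 < CS * ψ s + CT := fun s => by nlinarith [hψnn s]
  set η : ℝ → ℝ := fun s => Real.log (CS * ψ s + CT) with hηdef
  set η' : ℝ → ℝ :=
    fun s => (CS * ψ s + CT)⁻¹ * (CS * (u' s * (lam * f s (u s) (u' s)))) with hη'def
  have hηd : ∀ s ∈ Icc (0:ℝ) 1, HasDerivWithinAt η (η' s) (Icc (0:ℝ) 1) s := by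
    intro s hs
    have hinner : HasDerivWithinAt (fun x => CS * ψ x + CT)
        (CS * (u' s * (lam * f s (u s) (u' s)))) (Icc (0:ℝ) 1) s :=
      ((hψd s hs).const_mul CS).add_const CT
    exact (Real.hasDerivAt_log (hpos s).ne').comp_hasDerivWithinAt s hinner
  have hη'bdd : ∀ s ∈ Icc (0:ℝ) 1, |η' s| ≤ CS * |u' s| := by
    intro s hs
    have hfb : |lam * f s (u s) (u' s)| ≤ CS * ψ s + CT := by
      rw [abs_mul]
      have hl1 : |lam| ≤ 1 := abs_le.mpr ⟨by linarith [hlam.1], hlam.2⟩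
      have hfle := hgrowth s hs (u s) (u' s)
      rw [← hψeq s] at hfle
      have hSle : S s (u s) ≤ CS := hCS s hs (u s) (hubd s hs)
      have hTle : T s (u s) ≤ CT := hCT s hs (u s) (hubd s hs)
      have h1 : |f s (u s) (u' s)| ≤ CS * ψ s + CT := by
        nlinarith [hψnn s, (hSpos s hs (u s)).le]
      nlinarith [abs_nonneg (f s (u s) (u' s)), abs_nonneg lam]
    have hIpos : 0 < (CS * ψ s + CT)⁻¹ := inv_pos.mpr (hpos s)
    have heq : |η' s| = (CS * ψ s + CT)⁻¹ * (CS * (|u' s| * |lam * f s (u s) (u' s)|)) := by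
      rw [hη'def]
      rw [abs_mul, abs_mul, abs_mul, abs_inv, abs_of_pos (hpos s), abs_of_pos hCSpos]
    rw [heq]
    have h2 : CS * (|u' s| * |lam * f s (u s) (u' s)|) ≤ CS * (|u' s| * (CS * ψ s + CT)) := by
      apply mul_le_mul_of_nonneg_left _ hCSpos.le
      exact mul_le_mul_of_nonneg_left hfb (abs_nonneg _)
    calc (CS * ψ s + CT)⁻¹ * (CS * (|u' s| * |lam * f s (u s) (u' s)|))
        ≤ (CS * ψ s + CT)⁻¹ * (CS * (|u' s| * (CS * ψ s + CT))) :=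
          mul_le_mul_of_nonneg_left h2 hIpos.le
      _ = CS * |u' s| * ((CS * ψ s + CT) * (CS * ψ s + CT)⁻¹) := by ring
      _ = CS * |u' s| := by rw [mul_inv_cancel₀ (hpos s).ne', mul_one]
  have hucont : ContinuousOn u (Icc (0:ℝ) 1) := fun s hs => (hu s hs).continuousWithinAt
  obtain ⟨c, hcmem, hceq⟩ := exists_hasDerivAt_eq_slope u u' (by norm_num : (0:ℝ) < 1) hucont
    (fun x hx => (hu x (Ioo_subset_Icc_self hx)).hasDerivAt (Icc_mem_nhds hx.1 hx.2))
  have hcIcc : c ∈ Icc (0:ℝ) 1 := Ioo_subset_Icc_self hcmem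
  have hc2 : |u' c| ≤ 2 * r₀ := by
    have hone : (u 1 - u 0) / (1 - 0) = u 1 - u 0 := by norm_num
    rw [hceq, hone]
    have h0 := abs_le.mp (hubd 0 (by norm_num))
    have h1 := abs_le.mp (hubd 1 (by norm_num))
    rw [abs_le]
    constructor <;> linarith [h0.1, h0.2, h1.1, h1.2]
  intro t ht
  by_contra hcon
  push_neg at hcon
  have htbig : 2 * r₀ < |u' t| := by
    have h1 : 2 * r₀ ≤ max R (2 * r₀) := le_max_right _ _
    linarith
  have key : ∃ τ ∈ Icc (0:ℝ) 1, |u' τ| ≤ 2 * r₀ ∧ η t ≤ η τ + CS * (2 * r₀) := by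
    have hct : c ≠ t := by intro h; rw [h] at hc2; linarith
    rcases lt_or_gt_of_ne hct with hltc | hgtc
    · -- c < t
      have hsub' : Icc c t ⊆ Icc (0:ℝ) 1 := Icc_subset_Icc hcIcc.1 ht.2
      set A : Set ℝ := Icc c t ∩ (fun s => |u' s|) ⁻¹' (Iic (2 * r₀)) with hAdef
      have hAmem : ∀ s : ℝ, s ∈ A ↔ s ∈ Icc c t ∧ |u' s| ≤ 2 * r₀ := by
        intro s; simp [hAdef]
      have hAclosed : IsClosed A :=
        ContinuousOn.preimage_isClosed_of_isClosed ((hu'c.mono hsub').abs)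
          isClosed_Icc isClosed_Iic
      have hAne : A.Nonempty := ⟨c, (hAmem c).mpr ⟨⟨le_rfl, hltc.le⟩, hc2⟩⟩
      have hAbdd : BddAbove A := ⟨t, fun s hs => ((hAmem s).mp hs).1.2⟩
      set τ : ℝ := sSup A with hτdef
      have hτA := hAclosed.csSup_mem hAne hAbdd
      rw [hAmem] at hτA
      obtain ⟨hτIcc, hτ2⟩ := hτA
      have hτ01 : τ ∈ Icc (0:ℝ) 1 := hsub' hτIcc
      have hτt : τ < t := by
        rcases lt_or_eq_of_le hτIcc.2 with h | h
        · exact h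
        · exfalso; rw [h] at hτ2; linarith
      have hIoc : ∀ s ∈ Ioc τ t, 2 * r₀ < |u' s| := by
        intro s hs
        by_contra hle
        push_neg at hle
        have hsA : s ∈ A := (hAmem s).mpr ⟨⟨hτIcc.1.trans hs.1.le, hs.2⟩, hle⟩
        have h := le_csSup hAbdd hsA
        rw [← hτdef] at h
        linarith [hs.1]
      have hsub2 : Icc τ t ⊆ Icc (0:ℝ) 1 := Icc_subset_Icc hτ01.1 ht.2
      have hsign : (∀ s ∈ Ioo τ t, 0 ≤ u' s) ∨ (∀ s ∈ Ioo τ t, u' s ≤ 0) := by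
        rcases le_or_gt 0 (u' t) with hut | hut
        · left
          have hpos' : 2 * r₀ < u' t := by rwa [abs_of_nonneg hut] at htbig
          have hsc := sign_const_right (by linarith : (0:ℝ) < 2 * r₀)
            (hu'c.mono hsub2) hIoc hpos'
          intro s hs
          have h3 : 2 * r₀ < u' s := hsc s ⟨hs.1, hs.2.le⟩
          linarith
        · right
          have hneg' : 2 * r₀ < -u' t := by rwa [abs_of_neg hut] at htbig
          have hsc := sign_const_right (v := fun s => -u' s) (by linarith : (0:ℝ) < 2 * r₀)
            (hu'c.mono hsub2).neg (by intro s hs; simpa [abs_neg] using hIoc s hs) hneg'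
          intro s hs
          have h3 : 2 * r₀ < -u' s := hsc s ⟨hs.1, hs.2.le⟩
          linarith
      have hηd' : ∀ s ∈ Icc τ t, HasDerivWithinAt η (η' s) (Icc τ t) s :=
        fun s hs => (hηd s (hsub2 hs)).mono hsub2
      have hud' : ∀ s ∈ Icc τ t, HasDerivWithinAt u (u' s) (Icc τ t) s :=
        fun s hs => (hu s (hsub2 hs)).mono hsub2
      have hbd' : ∀ s ∈ Ioo τ t, |η' s| ≤ CS * |u' s| :=
        fun s hs => hη'bdd s (hsub2 (Ioo_subset_Icc_self hs))
      have h1 := abs_le.mp (hubd τ hτ01)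
      have h2 := abs_le.mp (hubd t ht)
      have hgr : |η t - η τ| ≤ CS * (2 * r₀) := by
        rcases hsign with hsgn | hsgn
        · have h := gronwall_mono hτt.le hCSpos.le hηd' hud' hbd' hsgn
          refine h.trans ?_
          nlinarith
        · have h := gronwall_anti hτt.le hCSpos.le hηd' hud' hbd' hsgn
          refine h.trans ?_
          nlinarith
      exact ⟨τ, hτ01, hτ2, by linarith [le_abs_self (η t - η τ)]⟩
    · -- t < c
      have hsub' : Icc t c ⊆ Icc (0:ℝ) 1 := Icc_subset_Icc ht.1 hcIcc.2
      set A : Set ℝ := Icc t c ∩ (fun s => |u' s|) ⁻¹' (Iic (2 * r₀)) with hAdef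
      have hAmem : ∀ s : ℝ, s ∈ A ↔ s ∈ Icc t c ∧ |u' s| ≤ 2 * r₀ := by
        intro s; simp [hAdef]
      have hAclosed : IsClosed A :=
        ContinuousOn.preimage_isClosed_of_isClosed ((hu'c.mono hsub').abs)
          isClosed_Icc isClosed_Iic
      have hAne : A.Nonempty := ⟨c, (hAmem c).mpr ⟨⟨hgtc.le, le_rfl⟩, hc2⟩⟩
      have hAbdd : BddBelow A := ⟨t, fun s hs => ((hAmem s).mp hs).1.1⟩
      set τ : ℝ := sInf A with hτdef
      have hτA := hAclosed.csInf_mem hAne hAbdd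
      rw [hAmem] at hτA
      obtain ⟨hτIcc, hτ2⟩ := hτA
      have hτ01 : τ ∈ Icc (0:ℝ) 1 := hsub' hτIcc
      have htτ : t < τ := by
        rcases lt_or_eq_of_le hτIcc.1 with h | h
        · exact h
        · exfalso; rw [← h] at hτ2; linarith
      have hIco : ∀ s ∈ Ico t τ, 2 * r₀ < |u' s| := by
        intro s hs
        by_contra hle
        push_neg at hle
        have hsA : s ∈ A := (hAmem s).mpr ⟨⟨hs.1, hs.2.le.trans hτIcc.2⟩, hle⟩
        have h := csInf_le hAbdd hsA
        rw [← hτdef] at h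
        linarith [hs.2]
      have hsub2 : Icc t τ ⊆ Icc (0:ℝ) 1 := Icc_subset_Icc ht.1 hτ01.2
      have hsign : (∀ s ∈ Ioo t τ, 0 ≤ u' s) ∨ (∀ s ∈ Ioo t τ, u' s ≤ 0) := by
        rcases le_or_gt 0 (u' t) with hut | hut
        · left
          have hpos' : 2 * r₀ < u' t := by rwa [abs_of_nonneg hut] at htbig
          have hsc := sign_const_left (by linarith : (0:ℝ) < 2 * r₀)
            (hu'c.mono hsub2) hIco hpos'
          intro s hs
          have h3 : 2 * r₀ < u' s := hsc s ⟨hs.1.le, hs.2⟩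
          linarith
        · right
          have hneg' : 2 * r₀ < -u' t := by rwa [abs_of_neg hut] at htbig
          have hsc := sign_const_left (v := fun s => -u' s) (by linarith : (0:ℝ) < 2 * r₀)
            (hu'c.mono hsub2).neg (by intro s hs; simpa [abs_neg] using hIco s hs) hneg'
          intro s hs
          have h3 : 2 * r₀ < -u' s := hsc s ⟨hs.1.le, hs.2⟩
          linarith
      have hηd' : ∀ s ∈ Icc t τ, HasDerivWithinAt η (η' s) (Icc t τ) s :=
        fun s hs => (hηd s (hsub2 hs)).mono hsub2
      have hud' : ∀ s ∈ Icc t τ, HasDerivWithinAt u (u' s) (Icc t τ) s :=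
        fun s hs => (hu s (hsub2 hs)).mono hsub2
      have hbd' : ∀ s ∈ Ioo t τ, |η' s| ≤ CS * |u' s| :=
        fun s hs => hη'bdd s (hsub2 (Ioo_subset_Icc_self hs))
      have h1 := abs_le.mp (hubd τ hτ01)
      have h2 := abs_le.mp (hubd t ht)
      have hgr : |η τ - η t| ≤ CS * (2 * r₀) := by
        rcases hsign with hsgn | hsgn
        · have h := gronwall_mono htτ.le hCSpos.le hηd' hud' hbd' hsgn
          refine h.trans ?_
          nlinarith
        · have h := gronwall_anti htτ.le hCSpos.le hηd' hud' hbd' hsgn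
          refine h.trans ?_
          nlinarith
      exact ⟨τ, hτ01, hτ2, by linarith [neg_abs_le (η τ - η t)]⟩
  obtain ⟨τ, hτmem, hτ2, hηle⟩ := key
  have hψτ : ψ τ ≤ B := by rw [hψeq τ]; exact hB _ hτ2
  have hexp1 : CS * ψ t + CT = Real.exp (η t) := (Real.exp_log (hpos t)).symm
  have hexp2 : Real.exp (η τ) = CS * ψ τ + CT := Real.exp_log (hpos τ)
  have hEb : CS * ψ t + CT ≤ E := by
    rw [hexp1]
    calc Real.exp (η t) ≤ Real.exp (η τ + CS * (2 * r₀)) := Real.exp_le_exp.mpr hηle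
      _ = Real.exp (η τ) * Real.exp (CS * (2 * r₀)) := by rw [Real.exp_add]
      _ ≤ (CS * B + CT) * Real.exp (CS * (2 * r₀)) := by
          apply mul_le_mul_of_nonneg_right _ (Real.exp_pos _).le
          rw [hexp2]
          nlinarith
      _ = E := rfl
  have hψtK : ψ t ≤ K := by
    rw [hKdef, le_div_iff₀ hCSpos]
    nlinarith
  have hRt : R ≤ |u' t| := by
    have h1 : R ≤ max R (2 * r₀) := le_max_left _ _
    linarith
  have hKlt := hRprop (u' t) hRt
  have hgrow2 := hΦgrow (u' t)
  rw [hψeq t] at hψtK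
  have hring : (kΦ - 1) * Φ (u' t) = kΦ * Φ (u' t) - Φ (u' t) := by ring
  linarith
end

section
/- Let ψ : ℝ → ℝ be an increasing homeomorphism of ℝ and fix A ∈ ℝ. Define G : C([0,1]) × ℝ → ℝ by G(v,c) = A + ∫₀¹ ψ(∫₀^τ v(s) ds + c) dτ. Then: (1) G is continuous; (2) for every v ∈ C([0,1]) the function c ↦ G(v,c) is an increasing homeomorphism of ℝ; and (3) whenever {v_n} is a bounded sequence in C([0,1]) and c_n → +∞ (respectively c_n → −∞), one has G(v_n, c_n) → +∞ (respectively G(v_n, c_n) → −∞). -/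
open Set Filter Topology MeasureTheory

lemma extIcc_joint_cont : Continuous fun p : C(Set.Icc (0:ℝ) 1, ℝ) × ℝ => extIcc p.1 p.2 := by
  unfold extIcc
  exact ContinuousEval.continuous_eval.comp
    (continuous_fst.prodMk ((continuous_projIcc (h := zero_le_one)).comp continuous_snd))

set_option maxHeartbeats 1000000 in
lemma F_joint_cont : Continuous fun p : C(Set.Icc (0:ℝ) 1, ℝ) × ℝ =>
    ∫ s in (0:ℝ)..p.2, extIcc p.1 s := by
  apply intervalIntegral.continuous_parametric_intervalIntegral_of_continuous
    (μ := volume)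
    (f := fun (p : C(Set.Icc (0:ℝ) 1, ℝ) × ℝ) t => extIcc p.1 t) (s := Prod.snd)
  · exact extIcc_joint_cont.comp ((continuous_fst.comp continuous_fst).prodMk continuous_snd)
  · exact continuous_snd

lemma F_cont (v : C(Set.Icc (0:ℝ) 1, ℝ)) :
    Continuous fun τ : ℝ => ∫ s in (0:ℝ)..τ, extIcc v s := by
  apply intervalIntegral.continuous_parametric_intervalIntegral_of_continuous (μ := volume)
    (f := fun (_ : ℝ) t => extIcc v t) (s := id)
  · exact extIcc_joint_cont.comp (continuous_const.prodMk continuous_snd)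
  · exact continuous_id

lemma abs_F_le (v : C(Set.Icc (0:ℝ) 1, ℝ)) {R : ℝ} (hR : ‖v‖ ≤ R) {τ : ℝ}
    (hτ : τ ∈ Set.Icc (0:ℝ) 1) : |∫ s in (0:ℝ)..τ, extIcc v s| ≤ R := by
  have h := intervalIntegral.norm_integral_le_of_norm_le_const
    (a := 0) (b := τ) (C := R) (f := extIcc v) (fun x _ => le_trans (v.norm_coe_le_norm _) hR)
  have hR0 : 0 ≤ R := le_trans (norm_nonneg v) hR
  calc |∫ s in (0:ℝ)..τ, extIcc v s| ≤ R * |τ - 0| := h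
    _ ≤ R * 1 := by
        apply mul_le_mul_of_nonneg_left _ hR0
        rw [sub_zero, abs_of_nonneg hτ.1]; exact hτ.2
    _ = R := mul_one R

lemma G_int (ψ : ℝ → ℝ) (hcont : Continuous ψ) (v : C(Set.Icc (0:ℝ) 1, ℝ)) (c : ℝ) :
    IntervalIntegrable (fun τ => ψ ((∫ s in (0:ℝ)..τ, extIcc v s) + c)) volume 0 1 :=
  (hcont.comp ((F_cont v).add continuous_const)).intervalIntegrable 0 1

lemma G_low (ψ : ℝ → ℝ) (hmono : StrictMono ψ) (hcont : Continuous ψ)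
    (v : C(Set.Icc (0:ℝ) 1, ℝ)) (R c : ℝ) (hR : ‖v‖ ≤ R) :
    ψ (c - R) ≤ ∫ τ in (0:ℝ)..1, ψ ((∫ s in (0:ℝ)..τ, extIcc v s) + c) := by
  have h := intervalIntegral.integral_mono_on (μ := volume) (a := (0:ℝ)) (b := 1)
    zero_le_one (intervalIntegrable_const (c := ψ (c - R))) (G_int ψ hcont v c)
    (fun τ hτ => by
      apply hmono.monotone
      have := (abs_le.1 (abs_F_le v hR hτ)).1
      linarith)
  simpa using h

lemma G_upp (ψ : ℝ → ℝ) (hmono : StrictMono ψ) (hcont : Continuous ψ)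
    (v : C(Set.Icc (0:ℝ) 1, ℝ)) (R c : ℝ) (hR : ‖v‖ ≤ R) :
    (∫ τ in (0:ℝ)..1, ψ ((∫ s in (0:ℝ)..τ, extIcc v s) + c)) ≤ ψ (c + R) := by
  have h := intervalIntegral.integral_mono_on (μ := volume) (a := (0:ℝ)) (b := 1)
    zero_le_one (G_int ψ hcont v c) (intervalIntegrable_const (c := ψ (c + R)))
    (fun τ hτ => by
      apply hmono.monotone
      have := (abs_le.1 (abs_F_le v hR hτ)).2
      linarith)
  simpa using h

/-- The function `G(v,c) = A + ∫₀¹ ψ(∫₀^τ v(s) ds + c) dτ` used for the Dirichlet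
boundary conditions: it is continuous, each `G(v,·)` is an increasing
homeomorphism of `ℝ`, and `G(vₙ,cₙ) → ±∞` whenever `{vₙ}` is bounded and
`cₙ → ±∞`. -/
theorem dirichlet_G_properties
    (ψ : ℝ → ℝ) (hmono : StrictMono ψ) (hcont : Continuous ψ)
    (hbij : Function.Bijective ψ) (A : ℝ) :
    Continuous (fun p : C(Set.Icc (0:ℝ) 1, ℝ) × ℝ =>
      A + ∫ τ in (0:ℝ)..1, ψ ((∫ s in (0:ℝ)..τ, extIcc p.1 s) + p.2)) ∧
    (∀ v : C(Set.Icc (0:ℝ) 1, ℝ),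
      StrictMono (fun c : ℝ =>
        A + ∫ τ in (0:ℝ)..1, ψ ((∫ s in (0:ℝ)..τ, extIcc v s) + c)) ∧
      Continuous (fun c : ℝ =>
        A + ∫ τ in (0:ℝ)..1, ψ ((∫ s in (0:ℝ)..τ, extIcc v s) + c)) ∧
      Function.Bijective (fun c : ℝ =>
        A + ∫ τ in (0:ℝ)..1, ψ ((∫ s in (0:ℝ)..τ, extIcc v s) + c))) ∧
    (∀ (vn : ℕ → C(Set.Icc (0:ℝ) 1, ℝ)) (cn : ℕ → ℝ),
      Bornology.IsBounded (Set.range vn) →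
      (Tendsto cn atTop atTop →
        Tendsto (fun n =>
          A + ∫ τ in (0:ℝ)..1, ψ ((∫ s in (0:ℝ)..τ, extIcc (vn n) s) + cn n))
          atTop atTop) ∧
      (Tendsto cn atTop atBot →
        Tendsto (fun n =>
          A + ∫ τ in (0:ℝ)..1, ψ ((∫ s in (0:ℝ)..τ, extIcc (vn n) s) + cn n))
          atTop atBot)) := by
  have hψtop : Tendsto ψ atTop atTop :=
    tendsto_atTop_atTop_of_monotone hmono.monotone
      (fun b => (hbij.2 b).imp (fun a ha => ha.ge))
  have hψbot : Tendsto ψ atBot atBot :=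
    tendsto_atBot_atBot_of_monotone hmono.monotone
      (fun b => (hbij.2 b).imp (fun a ha => ha.le))
  refine ⟨?_, ?_, ?_⟩
  · -- joint continuity
    apply continuous_const.add
    apply intervalIntegral.continuous_parametric_intervalIntegral_of_continuous' (μ := volume)
      (f := fun (p : C(Set.Icc (0:ℝ) 1, ℝ) × ℝ) τ =>
        ψ ((∫ s in (0:ℝ)..τ, extIcc p.1 s) + p.2))
    exact hcont.comp
      ((F_joint_cont.comp ((continuous_fst.comp continuous_fst).prodMk continuous_snd)).add
        (continuous_snd.comp continuous_fst))
  · intro v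
    have hcontc : Continuous (fun c : ℝ =>
        A + ∫ τ in (0:ℝ)..1, ψ ((∫ s in (0:ℝ)..τ, extIcc v s) + c)) := by
      apply continuous_const.add
      apply intervalIntegral.continuous_parametric_intervalIntegral_of_continuous' (μ := volume)
        (f := fun (c : ℝ) τ => ψ ((∫ s in (0:ℝ)..τ, extIcc v s) + c))
      exact hcont.comp (((F_cont v).comp continuous_snd).add continuous_fst)
    have hsm : StrictMono (fun c : ℝ =>
        A + ∫ τ in (0:ℝ)..1, ψ ((∫ s in (0:ℝ)..τ, extIcc v s) + c)) := by
      intro c c' hcc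
      have hpos : 0 < ∫ τ in (0:ℝ)..1,
          (ψ ((∫ s in (0:ℝ)..τ, extIcc v s) + c') - ψ ((∫ s in (0:ℝ)..τ, extIcc v s) + c)) := by
        apply intervalIntegral.intervalIntegral_pos_of_pos_on
          ((G_int ψ hcont v c').sub (G_int ψ hcont v c))
          (fun τ _ => sub_pos.2 (hmono (by linarith))) one_pos
      rw [intervalIntegral.integral_sub (G_int ψ hcont v c') (G_int ψ hcont v c)] at hpos
      simp only
      linarith
    have htop : Tendsto (fun c : ℝ =>
        A + ∫ τ in (0:ℝ)..1, ψ ((∫ s in (0:ℝ)..τ, extIcc v s) + c)) atTop atTop := by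
      apply tendsto_atTop_mono
        (fun c => add_le_add_right (G_low ψ hmono hcont v ‖v‖ c le_rfl) A)
      apply tendsto_atTop_add_const_left
      exact hψtop.comp (tendsto_atTop_add_const_right atTop (-‖v‖) tendsto_id |>.congr
        (fun c => (sub_eq_add_neg c ‖v‖).symm))
    have hbot : Tendsto (fun c : ℝ =>
        A + ∫ τ in (0:ℝ)..1, ψ ((∫ s in (0:ℝ)..τ, extIcc v s) + c)) atBot atBot := by
      apply tendsto_atBot_mono
        (fun c => add_le_add_right (G_upp ψ hmono hcont v ‖v‖ c le_rfl) A)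
      apply tendsto_atBot_add_const_left
      exact hψbot.comp (tendsto_atBot_add_const_right atBot ‖v‖ tendsto_id)
    exact ⟨hsm, hcontc, hsm.injective, hcontc.surjective htop hbot⟩
  · intro vn cn hb
    obtain ⟨R, hR⟩ := isBounded_iff_forall_norm_le.1 hb
    have hR' : ∀ n, ‖vn n‖ ≤ R := fun n => hR _ (Set.mem_range_self n)
    constructor
    · intro hc
      apply tendsto_atTop_mono
        (fun n => add_le_add_right (G_low ψ hmono hcont (vn n) R (cn n) (hR' n)) A)
      apply tendsto_atTop_add_const_left
      exact hψtop.comp ((tendsto_atTop_add_const_right atTop (-R) hc).congr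
        (fun n => (sub_eq_add_neg (cn n) R).symm))
    · intro hc
      apply tendsto_atBot_mono
        (fun n => add_le_add_right (G_upp ψ hmono hcont (vn n) R (cn n) (hR' n)) A)
      apply tendsto_atBot_add_const_left
      exact hψbot.comp (tendsto_atBot_add_const_right atTop R hc)
end
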